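/- arXiv:2510.02150 — 8 statements merged into one kernel-verified Lean document; each statement's English description precedes it below -/
import Mathlib

section
/- Let V be a vector space over ℚ, let k be an even natural number, and let B : ℕ × ℕ × ℕ → V be an arbitrary function. Then ∑_{p=0}^{k/2} (−1)^p · T_B(k,p) − (1/2)·(−1)^{k/2} · T_B(k, k/2) = ∑_{a=0}^{k} (−1)^a · B(k−a, a, 0). -/
open Finset

/-- `Tsum B k p = ∑_{n=0}^{p} ∑_{i even, p−n ≤ i ≤ k−n} C(i, p−n) • (B(k−n−i, n, i) + B(n, k−n−i, i))`. -/
def Tsum {V : Type*} [AddCommMonoid V] (B : ℕ × ℕ × ℕ → V) (k p : ℕ) : V :=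
  ∑ n ∈ Finset.range (p + 1),
    ∑ i ∈ (Finset.range (k - n + 1)).filter (fun i => p - n ≤ i ∧ Even i),
      (i.choose (p - n)) • (B (k - n - i, n, i) + B (n, k - n - i, i))


def wQ (m p : ℕ) : ℚ := if p = m then (-1)^m / 2 else (-1)^p

def cQ (m n i : ℕ) : ℚ :=
  ∑ p ∈ Finset.range (m+1), wQ m p * (if n ≤ p then (i.choose (p-n) : ℚ) else 0)

lemma altsum (i : ℕ) (hi : 1 ≤ i) (t : ℕ) :
    ∑ j ∈ Finset.range (t+1), (-1:ℚ)^j * (i.choose j) = (-1)^t * ((i-1).choose t) := by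
  induction t with
  | zero => simp
  | succ t ih =>
    rw [Finset.sum_range_succ, ih]
    obtain ⟨i', rfl⟩ : ∃ i', i = i' + 1 := ⟨i - 1, by omega⟩
    rw [Nat.choose_succ_succ]
    push_cast
    simp [pow_succ]
    ring

lemma cQ_of_gt (m n i : ℕ) (hn : m < n) : cQ m n i = 0 := by
  unfold cQ
  apply Finset.sum_eq_zero
  intro p hp
  rw [Finset.mem_range] at hp
  rw [if_neg (by omega), mul_zero]

lemma cQ_closed (m n i : ℕ) (hn : n ≤ m) (hi : 1 ≤ i) :
    cQ m n i = (-1)^m / 2 * (2 * ((i-1).choose (m-n)) - (i.choose (m-n))) := by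
  unfold cQ
  have h1 : ∀ p ∈ Finset.range (m+1), wQ m p * (if n ≤ p then (i.choose (p-n) : ℚ) else 0)
      = if n ≤ p then wQ m p * (i.choose (p-n) : ℚ) else 0 := by
    intro p _; split <;> simp
  rw [Finset.sum_congr rfl h1, ← Finset.sum_filter]
  have h2 : (Finset.range (m+1)).filter (fun p => n ≤ p) = Finset.Ico n (m+1) := by
    ext p; simp [Finset.mem_filter, Finset.mem_Ico]; omega
  rw [h2, Finset.sum_Ico_eq_sum_range]
  have h3 : m + 1 - n = (m - n) + 1 := by omega
  rw [h3]
  have h4 : ∀ j ∈ Finset.range (m - n + 1),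
      wQ (m) (n + j) * (i.choose (n + j - n) : ℚ)
      = (-1:ℚ)^n * ((-1:ℚ)^j * (i.choose j)) - (if j = m - n then (-1:ℚ)^m / 2 * (i.choose j) else 0) := by
    intro j hj
    rw [Finset.mem_range] at hj
    have : n + j - n = j := by omega
    rw [this]
    unfold wQ
    by_cases hjm : j = m - n
    · rw [if_pos (by omega), if_pos hjm]
      have : (-1:ℚ)^n * (-1:ℚ)^j = (-1:ℚ)^m := by
        rw [← pow_add]; congr 1; omega
      field_simp
      rw [← this]
      ring
    · rw [if_neg (by omega), if_neg hjm, pow_add]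
      ring
  rw [Finset.sum_congr rfl h4, Finset.sum_sub_distrib, ← Finset.mul_sum,
    altsum i hi, Finset.sum_ite_eq' (Finset.range (m-n+1)) (m-n)]
  rw [if_pos (by simp)]
  have : (-1:ℚ)^n * (-1:ℚ)^(m-n) = (-1:ℚ)^m := by
    rw [← pow_add]; congr 1; omega
  rw [← mul_assoc, this]
  ring

lemma choose_refl (i t : ℕ) (hi : 1 ≤ i) (ht : t ≤ i) :
    (i-1).choose t + (i-1).choose (i-t) = i.choose t := by
  rcases Nat.eq_zero_or_pos t with rfl | hpos
  · simp [Nat.choose_eq_zero_of_lt (show i - 1 < i by omega)]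
  · obtain ⟨t', rfl⟩ : ∃ t', t = t' + 1 := ⟨t - 1, by omega⟩
    obtain ⟨i', rfl⟩ : ∃ i', i = i' + 1 := ⟨i - 1, by omega⟩
    have h1 : i' + 1 - (t' + 1) = i' - t' := by omega
    rw [h1, Nat.add_sub_cancel, Nat.choose_symm (by omega), Nat.choose_succ_succ]
    simp only [Nat.succ_eq_add_one]
    omega

lemma cQ_key (m n i : ℕ) (hi : 1 ≤ i) (hni : n + i ≤ m + m) :
    cQ m (m + m - i - n) i = - cQ m n i := by
  set n' := m + m - i - n with hn'
  by_cases hn : n ≤ m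
  · by_cases hn2 : n' ≤ m
    · rw [cQ_closed m n i hn hi, cQ_closed m n' i hn2 hi]
      have ht' : m - n' = i - (m - n) := by omega
      have ht : m - n ≤ i := by omega
      rw [ht']
      have key := choose_refl i (m-n) hi ht
      have key2 : (i-1).choose (i - (m-n)) + (i-1).choose (i - (i - (m-n))) = i.choose (i - (m-n)) :=
        choose_refl i (i - (m-n)) hi (by omega)
      have h5 : i - (i - (m - n)) = m - n := by omega
      rw [h5] at key2
      have h6 : i.choose (i - (m-n)) = i.choose (m-n) := Nat.choose_symm ht
      rw [h6] at key2
      have e1 : ((i-1).choose (i - (m-n)) : ℚ) = (i.choose (m-n) : ℚ) - ((i-1).choose (m-n) : ℚ) := by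
        push_cast [← key2]; ring
      rw [e1, h6]; ring
    · -- n' > m: then m - n > i, both sides 0
      rw [cQ_of_gt m n' i (by omega), cQ_closed m n i hn hi]
      have h7 : i < m - n := by omega
      rw [Nat.choose_eq_zero_of_lt (by omega), Nat.choose_eq_zero_of_lt (by omega)]
      norm_num
  · -- n > m : cQ n = 0; n' ≤ m with m - n' > i, or n' > m impossible-ish
    rw [cQ_of_gt m n i (by omega)]
    by_cases hn2 : n' ≤ m
    · rw [cQ_closed m n' i hn2 hi]
      have h7 : i < m - n' := by omega
      rw [Nat.choose_eq_zero_of_lt (by omega), Nat.choose_eq_zero_of_lt (by omega)]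
      norm_num
    · rw [cQ_of_gt m n' i (by omega)]; norm_num


lemma cQ_zero (m n : ℕ) : cQ m n 0 = if n ≤ m then wQ m n else 0 := by
  unfold cQ
  have h : ∀ p ∈ Finset.range (m+1),
      wQ m p * (if n ≤ p then ((Nat.choose 0 (p-n)) : ℚ) else 0)
      = if p = n then wQ m p else 0 := by
    intro p _
    by_cases hpn : p = n
    · subst hpn; simp
    · rw [if_neg hpn]
      by_cases hle : n ≤ p
      · rw [if_pos hle, Nat.choose_eq_zero_of_lt (by omega)]; simp
      · rw [if_neg hle, mul_zero]
  rw [Finset.sum_congr rfl h, Finset.sum_ite_eq' (Finset.range (m+1)) n (wQ m)]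
  simp [Nat.lt_succ_iff]



lemma T_eq {V : Type*} [AddCommGroup V] [Module ℚ V] (B : ℕ × ℕ × ℕ → V) (m p : ℕ) (hp : p ≤ m) :
    Tsum B (m+m) p = ∑ n ∈ Finset.range (m+m+1), ∑ i ∈ Finset.range (m+m+1),
      (if n ≤ p ∧ n + i ≤ m+m ∧ Even i then (i.choose (p-n) : ℚ) else 0) •
        (B (m+m-n-i, n, i) + B (n, m+m-n-i, i)) := by
  unfold Tsum
  have step1 : ∀ n ∈ Finset.range (p+1),
      (∑ i ∈ (Finset.range (m+m-n+1)).filter (fun i => p-n ≤ i ∧ Even i),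
        (i.choose (p-n)) • (B (m+m-n-i, n, i) + B (n, m+m-n-i, i)))
      = ∑ i ∈ Finset.range (m+m+1),
        (if n ≤ p ∧ n + i ≤ m+m ∧ Even i then (i.choose (p-n) : ℚ) else 0) •
          (B (m+m-n-i, n, i) + B (n, m+m-n-i, i)) := by
    intro n hn
    rw [Finset.mem_range] at hn
    rw [Finset.sum_filter]
    have conv1 : ∀ i ∈ Finset.range (m+m-n+1),
        (if p - n ≤ i ∧ Even i then
          (i.choose (p-n)) • (B (m+m-n-i, n, i) + B (n, m+m-n-i, i)) else 0)
        = (if n ≤ p ∧ n + i ≤ m+m ∧ Even i then (i.choose (p-n) : ℚ) else 0) •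
          (B (m+m-n-i, n, i) + B (n, m+m-n-i, i)) := by
      intro i hi
      rw [Finset.mem_range] at hi
      by_cases he : Even i
      · by_cases hpn : p - n ≤ i
        · rw [if_pos ⟨hpn, he⟩, if_pos ⟨by omega, by omega, he⟩, Nat.cast_smul_eq_nsmul]
        · rw [if_neg (by tauto), if_pos ⟨by omega, by omega, he⟩,
            Nat.choose_eq_zero_of_lt (by omega)]
          simp
      · rw [if_neg (by tauto), if_neg (by tauto), zero_smul]
    rw [Finset.sum_congr rfl conv1]
    apply Finset.sum_subset (Finset.range_subset_range.2 (by omega))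
    intro i hi hni
    rw [Finset.mem_range] at hi
    rw [Finset.mem_range] at hni
    rw [if_neg (by omega), zero_smul]
  rw [Finset.sum_congr rfl step1]
  apply Finset.sum_subset (Finset.range_subset_range.2 (by omega))
  intro n hn hnp
  rw [Finset.mem_range] at hn
  rw [Finset.mem_range] at hnp
  apply Finset.sum_eq_zero
  intro i _
  rw [if_neg (by omega), zero_smul]


lemma lemA (V : Type*) [AddCommGroup V] [Module ℚ V] (m : ℕ) (B : ℕ × ℕ × ℕ → V) :
    (∑ p ∈ Finset.range (m + 1), ((-1 : ℚ) ^ p) • Tsum B (m+m) p)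
      - (((1 : ℚ) / 2) * (-1 : ℚ) ^ m) • Tsum B (m+m) m
      = ∑ n ∈ Finset.range (m+m+1), ∑ i ∈ Finset.range (m+m+1),
        (if n + i ≤ m+m ∧ Even i then cQ m n i else 0) •
          (B (m+m-n-i, n, i) + B (n, m+m-n-i, i)) := by
  have hLHS : (∑ p ∈ Finset.range (m + 1), ((-1 : ℚ) ^ p) • Tsum B (m+m) p)
      - (((1 : ℚ) / 2) * (-1 : ℚ) ^ m) • Tsum B (m+m) m
      = ∑ p ∈ Finset.range (m+1), wQ m p • Tsum B (m+m) p := by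
    rw [Finset.sum_range_succ, Finset.sum_range_succ]
    have h1 : ∀ p ∈ Finset.range m, wQ m p • Tsum B (m+m) p
        = ((-1:ℚ)^p) • Tsum B (m+m) p := by
      intro p hp
      rw [Finset.mem_range] at hp
      rw [show wQ m p = (-1:ℚ)^p from if_neg (by omega)]
    rw [Finset.sum_congr rfl h1, show wQ m m = (-1:ℚ)^m/2 from if_pos rfl]
    rw [add_sub_assoc, ← sub_smul]
    congr 2
    ring
  rw [hLHS]
  have h2 : ∀ p ∈ Finset.range (m+1), wQ m p • Tsum B (m+m) p
      = ∑ n ∈ Finset.range (m+m+1), ∑ i ∈ Finset.range (m+m+1),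
        (wQ m p * if n ≤ p ∧ n + i ≤ m+m ∧ Even i then (i.choose (p-n) : ℚ) else 0) •
          (B (m+m-n-i, n, i) + B (n, m+m-n-i, i)) := by
    intro p hp
    rw [Finset.mem_range] at hp
    rw [T_eq B m p (by omega), Finset.smul_sum]
    refine Finset.sum_congr rfl fun n _ => ?_
    rw [Finset.smul_sum]
    refine Finset.sum_congr rfl fun i _ => ?_
    rw [smul_smul]
  rw [Finset.sum_congr rfl h2, Finset.sum_comm]
  refine Finset.sum_congr rfl fun n _ => ?_
  rw [Finset.sum_comm]
  refine Finset.sum_congr rfl fun i _ => ?_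
  rw [← Finset.sum_smul]
  congr 1
  by_cases h : n + i ≤ m + m ∧ Even i
  · rw [if_pos h]
    unfold cQ
    refine Finset.sum_congr rfl fun p _ => ?_
    congr 1
    by_cases hnp : n ≤ p
    · rw [if_pos ⟨hnp, h.1, h.2⟩, if_pos hnp]
    · rw [if_neg (by tauto), if_neg hnp]
  · rw [if_neg h]
    apply Finset.sum_eq_zero
    intro p _
    rw [if_neg (by tauto), mul_zero]


lemma lemB (V : Type*) [AddCommGroup V] [Module ℚ V] (m : ℕ) (B : ℕ × ℕ × ℕ → V) :
    (∑ n ∈ Finset.range (m+m+1), ∑ i ∈ Finset.range (m+m+1),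
        (if n + i ≤ m+m ∧ Even i then cQ m n i else 0) •
          (B (m+m-n-i, n, i) + B (n, m+m-n-i, i)))
      = ∑ a ∈ Finset.range (m + m + 1), ((-1 : ℚ) ^ a) • B (m + m - a, a, 0) := by
  rw [Finset.sum_comm, Finset.sum_range_succ']
  have partB : ∀ i ∈ Finset.range (m+m), (∑ n ∈ Finset.range (m+m+1),
      (if n + (i+1) ≤ m+m ∧ Even (i+1) then cQ m n (i+1) else 0) •
        (B (m+m-n-(i+1), n, i+1) + B (n, m+m-n-(i+1), i+1))) = 0 := by
    intro i hi
    rw [Finset.mem_range] at hi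
    by_cases he : Even (i+1)
    · have conv : ∀ n ∈ Finset.range (m+m+1),
          (if n + (i+1) ≤ m+m ∧ Even (i+1) then cQ m n (i+1) else 0) •
            (B (m+m-n-(i+1), n, i+1) + B (n, m+m-n-(i+1), i+1))
          = if n + (i+1) ≤ m+m then cQ m n (i+1) •
              (B (m+m-n-(i+1), n, i+1) + B (n, m+m-n-(i+1), i+1)) else 0 := by
        intro n _
        by_cases hc : n + (i+1) ≤ m+m
        · rw [if_pos ⟨hc, he⟩, if_pos hc]
        · rw [if_neg (by tauto), if_neg hc, zero_smul]
      rw [Finset.sum_congr rfl conv, ← Finset.sum_filter]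
      set s := (Finset.range (m+m+1)).filter (fun n => n + (i+1) ≤ m+m) with hs
      set S := ∑ n ∈ s, cQ m n (i+1) •
          (B (m+m-n-(i+1), n, i+1) + B (n, m+m-n-(i+1), i+1)) with hS
      have hmem : ∀ n ∈ s, n + (i+1) ≤ m + m ∧ n ≤ m+m := by
        intro n hn
        rw [hs, Finset.mem_filter, Finset.mem_range] at hn
        omega
      have hrefl : S = ∑ n ∈ s, (- cQ m n (i+1)) •
          (B (m+m-n-(i+1), n, i+1) + B (n, m+m-n-(i+1), i+1)) := by
        rw [hS]
        refine Finset.sum_nbij' (fun n => m+m-(i+1)-n) (fun n => m+m-(i+1)-n)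
          ?_ ?_ ?_ ?_ ?_
        · intro n hn; have := hmem n hn
          show m+m-(i+1)-n ∈ s
          rw [hs, Finset.mem_filter, Finset.mem_range]; omega
        · intro n hn; have := hmem n hn
          show m+m-(i+1)-n ∈ s
          rw [hs, Finset.mem_filter, Finset.mem_range]; omega
        · intro n hn; have := hmem n hn
          show m+m-(i+1)-(m+m-(i+1)-n) = n
          omega
        · intro n hn; have := hmem n hn
          show m+m-(i+1)-(m+m-(i+1)-n) = n
          omega
        · intro n hn
          have hn2 := hmem n hn
          show cQ m n (i+1) • (B (m+m-n-(i+1), n, i+1) + B (n, m+m-n-(i+1), i+1))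
            = (- cQ m (m+m-(i+1)-n) (i+1)) • (B (m+m-(m+m-(i+1)-n)-(i+1), m+m-(i+1)-n, i+1)
              + B (m+m-(i+1)-n, m+m-(m+m-(i+1)-n)-(i+1), i+1))
          rw [cQ_key m n (i+1) (by omega) hn2.1, neg_neg]
          have e1 : m+m-(m+m-(i+1)-n)-(i+1) = n := by omega
          have e2 : m+m-(i+1)-n = m+m-n-(i+1) := by omega
          rw [e1, e2, add_comm (B (n, m+m-n-(i+1), i+1))]
      have h2 : S = - S := by
        nth_rewrite 1 [hrefl]
        rw [← Finset.sum_neg_distrib]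
        refine Finset.sum_congr rfl fun n _ => ?_
        rw [neg_smul]
      have h3 : S + S = 0 := by nth_rewrite 1 [h2]; exact neg_add_cancel S
      have h4 : (2:ℚ) • S = 0 := by rw [two_smul]; exact h3
      calc S = ((1:ℚ)/2 * 2) • S := by norm_num
        _ = ((1:ℚ)/2) • ((2:ℚ) • S) := by rw [mul_smul]
        _ = 0 := by rw [h4, smul_zero]
    · apply Finset.sum_eq_zero
      intro n _
      rw [if_neg (by tauto), zero_smul]
  rw [Finset.sum_congr rfl partB, Finset.sum_const_zero, zero_add]
  -- part A : the i = 0 term equals RHS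
  have convA : ∀ n ∈ Finset.range (m+m+1),
      (if n + 0 ≤ m+m ∧ Even 0 then cQ m n 0 else 0) •
        (B (m+m-n-0, n, 0) + B (n, m+m-n-0, 0))
      = (if n ≤ m then wQ m n else 0) • (B (m+m-n, n, 0) + B (n, m+m-n, 0)) := by
    intro n hn
    rw [Finset.mem_range] at hn
    rw [if_pos ⟨by omega, Even.zero⟩, cQ_zero]
    simp
  rw [Finset.sum_congr rfl convA]
  rw [← Finset.sum_subset (Finset.range_subset_range.2 (show m+1 ≤ m+m+1 by omega))
      (fun n hn hn2 => by
        rw [Finset.mem_range] at hn hn2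
        rw [if_neg (by omega), zero_smul])]
  have convA2 : ∀ n ∈ Finset.range (m+1),
      (if n ≤ m then wQ m n else 0) • (B (m+m-n, n, 0) + B (n, m+m-n, 0))
      = wQ m n • B (m+m-n, n, 0) + wQ m n • B (n, m+m-n, 0) := by
    intro n hn
    rw [Finset.mem_range] at hn
    rw [if_pos (by omega), smul_add]
  rw [Finset.sum_congr rfl convA2, Finset.sum_add_distrib]
  -- now RHS split
  have rhs_split : (∑ a ∈ Finset.range (m + m + 1), ((-1 : ℚ) ^ a) • B (m + m - a, a, 0))
      = (∑ a ∈ Finset.range (m+1), ((-1 : ℚ) ^ a) • B (m + m - a, a, 0))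
        + ∑ n ∈ Finset.range m, ((-1 : ℚ) ^ n) • B (n, m + m - n, 0) := by
    rw [Finset.range_eq_Ico, ← Finset.sum_Ico_consecutive _ (show 0 ≤ m+1 by omega)
      (show m+1 ≤ m+m+1 by omega), ← Finset.range_eq_Ico]
    congr 1
    refine Finset.sum_nbij' (fun a => m+m-a) (fun n => m+m-n) ?_ ?_ ?_ ?_ ?_
    · intro a ha; rw [Finset.mem_Ico] at ha
      show m+m-a ∈ Finset.range m
      rw [Finset.mem_range]; omega
    · intro n hn; rw [Finset.mem_range] at hn
      show m+m-n ∈ Finset.Ico (m+1) (m+m+1)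
      rw [Finset.mem_Ico]; omega
    · intro a ha; rw [Finset.mem_Ico] at ha
      show m+m-(m+m-a) = a
      omega
    · intro n hn; rw [Finset.mem_range] at hn
      show m+m-(m+m-n) = n
      omega
    · intro a ha
      rw [Finset.mem_Ico] at ha
      show ((-1:ℚ)^a) • B (m+m-a, a, 0)
        = ((-1:ℚ)^(m+m-a)) • B (m+m-a, m+m-(m+m-a), 0)
      have e1 : m+m-(m+m-a) = a := by omega
      have e2 : (-1:ℚ)^(m+m-a) = (-1:ℚ)^a := by
        have h : m+m-a + 2*(a-m) = a := by omega
        calc (-1:ℚ)^(m+m-a) = (-1:ℚ)^(m+m-a) * ((-1:ℚ)^2)^(a-m) := by norm_num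
          _ = (-1:ℚ)^(m+m-a+2*(a-m)) := by rw [pow_add, pow_mul]
          _ = (-1:ℚ)^a := by rw [h]
      rw [e1, e2]
  rw [rhs_split]
  -- both sides: split the last term of range (m+1) sums
  rw [Finset.sum_range_succ, Finset.sum_range_succ, Finset.sum_range_succ]
  have hw : ∀ n ∈ Finset.range m, wQ m n • B (m+m-n, n, 0) = ((-1:ℚ)^n) • B (m+m-n, n, 0) := by
    intro n hn; rw [Finset.mem_range] at hn
    rw [show wQ m n = (-1:ℚ)^n from if_neg (by omega)]
  have hw2 : ∀ n ∈ Finset.range m, wQ m n • B (n, m+m-n, 0) = ((-1:ℚ)^n) • B (n, m+m-n, 0) := by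
    intro n hn; rw [Finset.mem_range] at hn
    rw [show wQ m n = (-1:ℚ)^n from if_neg (by omega)]
  rw [Finset.sum_congr rfl hw, Finset.sum_congr rfl hw2,
    show wQ m m = (-1:ℚ)^m/2 from if_pos rfl, show m+m-m = m by omega]
  set X := B (m, m, 0)
  set A1 := ∑ n ∈ Finset.range m, ((-1:ℚ)^n) • B (m+m-n, n, 0)
  set A2 := ∑ n ∈ Finset.range m, ((-1:ℚ)^n) • B (n, m+m-n, 0)
  module


/-- Lemma 5.3(1): for even `k`,
`∑_{p=0}^{k/2} (−1)^p T(k,p) − (1/2)(−1)^{k/2} T(k,k/2) = ∑_{a=0}^{k} (−1)^a B(k−a,a,0)`. -/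
theorem stmt_0 (V : Type*) [AddCommGroup V] [Module ℚ V] (k : ℕ) (hk : Even k)
    (B : ℕ × ℕ × ℕ → V) :
    (∑ p ∈ Finset.range (k / 2 + 1), ((-1 : ℚ) ^ p) • Tsum B k p)
      - (((1 : ℚ) / 2) * (-1 : ℚ) ^ (k / 2)) • Tsum B k (k / 2)
      = ∑ a ∈ Finset.range (k + 1), ((-1 : ℚ) ^ a) • B (k - a, a, 0) := by
  obtain ⟨m, rfl⟩ := hk
  rw [show (m+m)/2 = m from by omega]
  exact (lemA V m B).trans (lemB V m B)
end

section
/- Let V be an additive commutative group, let k be an odd natural number, and let B : ℕ × ℕ × ℕ → V be an arbitrary function. Then ∑_{p=0}^{⌊k/2⌋} (−1)^p · (k−2p) · T_B(k,p) = ∑_{a=0}^{⌊k/2⌋} (−1)^a · (k−2a) · (B(k−a, a, 0) + B(a, k−a, 0)). -/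
/-!
Exchanging the order of summation turns the left side into a sum, over even `i` and `n + i ≤ k`,
of `c(n, i) • (B(k-n-i, n, i) + B(n, k-n-i, i))`, where `c(n, i)` is the sum of `C(i, j) w(n + j)`
over `j ≤ i` with `n + j ≤ ⌊k/2⌋`, and `w(p) = (-1)^p (k - 2p)`. The block `i = 0` is the right
side. Since `k` is odd, `w(k - p) = w(p)`, and reflecting `j ↦ i - j` shows that
`c(n, i) + c(k - i - n, i)` is the untruncated sum `∑_{j ≤ i} C(i, j) w(n + j)`: an `i`-th finite
difference of a linear function, hence zero for `i ≥ 2`. Pairing `n` with `k - i - n` therefore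
kills every block with `i ≥ 2`.
-/

open Finset

theorem Int.alternating_sum_range_mul_choose {n : ℕ} (hn : 1 < n) :
    ∑ j ∈ Finset.range (n + 1), (-1 : ℤ) ^ j * j * n.choose j = 0 := by
  obtain ⟨n, rfl⟩ : ∃ m, n = m + 1 := ⟨n - 1, by omega⟩
  have hshift (j : ℕ) : (-1 : ℤ) ^ (j + 1) * ↑(j + 1) * ((n + 1).choose (j + 1) : ℕ)
      = -(n + 1) * ((-1) ^ j * n.choose j) := by
    have h : ((n : ℤ) + 1) * n.choose j = (n + 1).choose (j + 1) * (j + 1) := by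
      exact_mod_cast Nat.add_one_mul_choose_eq n j
    push_cast
    linear_combination (-1 : ℤ) ^ j * h
  rw [sum_range_succ', Nat.cast_zero, mul_zero, zero_mul, add_zero]
  simp_rw [hshift]
  rw [← mul_sum, Int.alternating_sum_range_choose_of_ne (by omega), mul_zero]

theorem Int.alternating_sum_range_linear_mul_choose {n : ℕ} (hn : 1 < n) (a b : ℤ) :
    ∑ j ∈ Finset.range (n + 1), (-1) ^ j * (a + b * j) * n.choose j = 0 :=
  calc _ = a * ∑ j ∈ Finset.range (n + 1), (-1) ^ j * (n.choose j : ℤ)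
        + b * ∑ j ∈ Finset.range (n + 1), (-1 : ℤ) ^ j * j * n.choose j := by
          rw [mul_sum, mul_sum, ← sum_add_distrib]
          exact sum_congr rfl fun j _ => by ring
    _ = 0 := by
      rw [Int.alternating_sum_range_choose_of_ne (by omega),
        Int.alternating_sum_range_mul_choose hn]
      ring

theorem sum_range_smul_add_swap {R V : Type*} [Semiring R] [AddCommMonoid V] [Module R V]
    (N : ℕ) (a : ℕ → R) (f : ℕ → ℕ → V) :
    ∑ n ∈ range (N + 1), a n • (f (N - n) n + f n (N - n))
      = ∑ n ∈ range (N + 1), (a n + a (N - n)) • f n (N - n) := by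
  have hreflect : ∑ n ∈ range (N + 1), a n • f (N - n) n
      = ∑ n ∈ range (N + 1), a (N - n) • f n (N - n) := by
    rw [← sum_range_reflect]
    refine sum_congr rfl fun n hn => ?_
    rw [mem_range] at hn
    rw [Nat.add_sub_cancel, Nat.sub_sub_self (by omega)]
  simp only [smul_add, add_smul, sum_add_distrib, hreflect, add_comm]

def signedWeight (k p : ℕ) : ℤ := (-1) ^ p * ((k : ℤ) - 2 * p)

theorem signedWeight_sub_of_odd {k : ℕ} (hk : Odd k) {p : ℕ} (hp : p ≤ k) :
    signedWeight k (k - p) = signedWeight k p := by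
  obtain ⟨m, rfl⟩ := Nat.exists_eq_add_of_le hp
  rw [Nat.add_sub_cancel_left, signedWeight, signedWeight]
  have hodd : (-1 : ℤ) ^ p * (-1) ^ m = -1 := by rw [← pow_add, hk.neg_one_pow]
  have hsq : (-1 : ℤ) ^ p * (-1) ^ p = 1 := by rw [← pow_add, ← two_mul, pow_mul]; norm_num
  push_cast
  linear_combination ((p : ℤ) - m) * ((-1) ^ p * hodd - (-1) ^ m * hsq)

theorem sum_signedWeight_add_mul_choose (k n : ℕ) {i : ℕ} (hi : 1 < i) :
    ∑ j ∈ range (i + 1), signedWeight k (n + j) * i.choose j = 0 := by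
  rw [← mul_zero ((-1 : ℤ) ^ n),
    ← Int.alternating_sum_range_linear_mul_choose hi (k - 2 * n) (-2), mul_sum]
  refine sum_congr rfl fun j _ => ?_
  simp only [signedWeight, pow_add]
  push_cast
  ring

-- `c(n, i)` of the header, with `t = ⌊k/2⌋`
def truncCoeff (k t n i : ℕ) : ℤ :=
  ∑ j ∈ (range (i + 1)).filter (fun j => n + j ≤ t), signedWeight k (n + j) * i.choose j

theorem truncCoeff_zero_right (k t n : ℕ) :
    truncCoeff k t n 0 = if n ≤ t then signedWeight k n else 0 := by
  split_ifs with h <;> simp [truncCoeff, filter_singleton, h]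

theorem truncCoeff_of_lt {k t n : ℕ} (h : t < n) (i : ℕ) : truncCoeff k t n i = 0 :=
  sum_eq_zero fun j hj => by simp only [mem_filter] at hj; omega

theorem truncCoeff_add_truncCoeff {k t n m i : ℕ} (hk : k = 2 * t + 1) (hnm : n + m + i = k)
    (hi : 1 < i) : truncCoeff k t n i + truncCoeff k t m i = 0 := by
  have hreflect : truncCoeff k t m i
      = ∑ j ∈ (range (i + 1)).filter (fun j => ¬ n + j ≤ t),
          signedWeight k (n + j) * i.choose j := by
    rw [truncCoeff, sum_filter, sum_filter, ← sum_range_reflect]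
    refine sum_congr rfl fun j hj => ?_
    rw [mem_range] at hj
    have hmj : m + (i + 1 - 1 - j) = k - (n + j) := by omega
    rw [hmj, signedWeight_sub_of_odd ⟨t, hk⟩ (by omega), Nat.add_sub_cancel,
      Nat.choose_symm (by omega)]
    exact if_congr (by omega) rfl rfl
  rw [hreflect, truncCoeff, sum_filter_add_sum_filter_not, sum_signedWeight_add_mul_choose k n hi]

section
variable {V : Type*} [AddCommGroup V] (B : ℕ × ℕ × ℕ → V)

theorem sum_truncCoeff_smul_eq_zero {k t i : ℕ} (hk : k = 2 * t + 1) (hi : 1 < i)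
    (hik : i ≤ k) :
    ∑ n ∈ range (k - i + 1),
      truncCoeff k t n i • (B (k - n - i, n, i) + B (n, k - n - i, i)) = 0 := by
  have hsub (n : ℕ) : k - n - i = k - i - n := Nat.sub_right_comm k n i
  simp_rw [hsub]
  rw [sum_range_smul_add_swap (k - i) (truncCoeff k t · i) (fun a b => B (a, b, i))]
  refine sum_eq_zero fun n hn => ?_
  rw [mem_range] at hn
  rw [truncCoeff_add_truncCoeff hk (by omega) hi, zero_smul]

theorem sum_signedWeight_smul_Tsum {k t : ℕ} (htk : t ≤ k) :
    ∑ p ∈ range (t + 1), signedWeight k p • Tsum B k p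
      = ∑ i ∈ (range (k + 1)).filter Even, ∑ n ∈ range (k - i + 1),
          truncCoeff k t n i • (B (k - n - i, n, i) + B (n, k - n - i, i)) := by
  set W : ℕ → ℕ → V := fun n i => B (k - n - i, n, i) + B (n, k - n - i, i)
  have hTsum (p : ℕ) : signedWeight k p • Tsum B k p = ∑ n ∈ range (p + 1),
      ∑ i ∈ (range (k - n + 1)).filter (fun i => p - n ≤ i ∧ Even i),
        (signedWeight k (n + (p - n)) * i.choose (p - n)) • W n i := by
    rw [Tsum, smul_sum]
    refine sum_congr rfl fun n hn => ?_
    rw [Nat.add_sub_cancel' (by rw [mem_range] at hn; omega), smul_sum]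
    exact sum_congr rfl fun i _ => by rw [mul_smul, Nat.cast_smul_eq_nsmul]
  have hswap (n : ℕ) : ∑ j ∈ range (t + 1 - n),
      ∑ i ∈ (range (k - n + 1)).filter (fun i => j ≤ i ∧ Even i),
        (signedWeight k (n + j) * i.choose j) • W n i
      = ∑ i ∈ (range (k - n + 1)).filter Even, truncCoeff k t n i • W n i := by
    rw [sum_comm' (t' := (range (k - n + 1)).filter Even)
      (s' := fun i => (range (i + 1)).filter (fun j => n + j ≤ t))]
    · simp_rw [truncCoeff, sum_smul]
    · intro j i
      simp only [mem_filter, mem_range, Nat.even_iff]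
      omega
  calc ∑ p ∈ range (t + 1), signedWeight k p • Tsum B k p
      = ∑ n ∈ range (t + 1), ∑ j ∈ range (t + 1 - n),
          ∑ i ∈ (range (k - n + 1)).filter (fun i => j ≤ i ∧ Even i),
            (signedWeight k (n + j) * i.choose j) • W n i := by
        simp_rw [hTsum]
        exact sum_range_diag_flip (t + 1) fun n j =>
          ∑ i ∈ (range (k - n + 1)).filter (fun i => j ≤ i ∧ Even i),
            (signedWeight k (n + j) * i.choose j) • W n i
    _ = ∑ n ∈ range (t + 1), ∑ i ∈ (range (k - n + 1)).filter Even,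
          truncCoeff k t n i • W n i := sum_congr rfl fun n _ => hswap n
    _ = ∑ n ∈ range (k + 1), ∑ i ∈ (range (k - n + 1)).filter Even,
          truncCoeff k t n i • W n i := by
        refine sum_subset (range_subset_range.mpr (by omega)) fun n _ hn => ?_
        rw [mem_range, not_lt] at hn
        exact sum_eq_zero fun i _ => by rw [truncCoeff_of_lt (by omega), zero_smul]
    _ = _ := by
        refine sum_comm' fun n i => ?_
        simp only [mem_filter, mem_range, Nat.even_iff]
        omega
end

/-- Lemma 5.3(2): for odd `k`,
`∑_{p=0}^{⌊k/2⌋} (−1)^p (k−2p) T(k,p) = ∑_{a=0}^{⌊k/2⌋} (−1)^a (k−2a) (B(k−a,a,0)+B(a,k−a,0))`. -/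
theorem stmt_1 (V : Type*) [AddCommGroup V] (k : ℕ) (hk : Odd k)
    (B : ℕ × ℕ × ℕ → V) :
    ∑ p ∈ Finset.range (k / 2 + 1), ((-1 : ℤ) ^ p * ((k : ℤ) - 2 * p)) • Tsum B k p
      = ∑ a ∈ Finset.range (k / 2 + 1),
          ((-1 : ℤ) ^ a * ((k : ℤ) - 2 * a)) • (B (k - a, a, 0) + B (a, k - a, 0)) := by
  obtain ⟨t, hkt⟩ := hk
  have hhalf : k / 2 = t := by omega
  change ∑ p ∈ range (k / 2 + 1), signedWeight k p • Tsum B k p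
    = ∑ a ∈ range (k / 2 + 1), signedWeight k a • (B (k - a, a, 0) + B (a, k - a, 0))
  rw [hhalf, sum_signedWeight_smul_Tsum B (by omega), sum_eq_single_of_mem 0 (by simp)]
  · have hrange : (range (k - 0 + 1)).filter (· ≤ t) = range (t + 1) := by
      ext n; simp only [mem_filter, mem_range]; omega
    simp_rw [truncCoeff_zero_right, ite_smul, zero_smul, ← sum_filter, hrange, Nat.sub_zero]
  · intro i hi hi0
    rw [mem_filter, mem_range] at hi
    obtain ⟨r, hr⟩ := hi.2
    exact sum_truncCoeff_smul_eq_zero B hkt (by omega) (by omega)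
end

section
/- For all integers m, n₀, i₀ with m ≥ 1, 0 ≤ n₀ ≤ m, i₀ even, and 0 < i₀ ≤ 2m − n₀, the following identity of integers holds: ∑_{p=0}^{m} (−1)^p · (2m+1−2p) · ( C(i₀, 2m+1−n₀−p) + C(i₀, p−n₀) ) = 0. -/
/-- The binomial coefficient `C(i, j)` for integer arguments, with the convention that
`C(i, j) = 0` whenever `j < 0` or `j > i`. -/
def Cz (i j : ℤ) : ℤ := if 0 ≤ j ∧ j ≤ i then (Nat.choose i.toNat j.toNat : ℤ) else 0

lemma neg_one_pow_eq_of_mul_one {x y : ℤ} (h : x * y = 1) (hy : y * y = 1) : x = y := by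
  calc x = x * (y * y) := by rw [hy, mul_one]
  _ = (x * y) * y := by ring
  _ = y := by rw [h, one_mul]

lemma neg_one_pow_eq_neg_of_mul_neg_one {x y : ℤ} (h : x * y = -1) (hy : y * y = 1) :
    x = -y := by
  calc x = x * (y * y) := by rw [hy, mul_one]
  _ = (x * y) * y := by ring
  _ = -y := by rw [h]; ring

lemma key_alt (n : ℕ) (hn : n ≠ 0) (he : Even n) (a : ℤ) :
    ∑ k ∈ Finset.range (n + 1), (-1 : ℤ) ^ k * (a - 2 * k) * n.choose k = 0 := by
  have hrefl := Finset.sum_range_reflect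
      (fun k => (-1 : ℤ) ^ k * (a - 2 * k) * n.choose k) (n + 1)
  have h2 : ∑ k ∈ Finset.range (n + 1), (-1 : ℤ) ^ k * (a - 2 * k) * n.choose k
      = ∑ k ∈ Finset.range (n + 1), (-1 : ℤ) ^ k * (a - 2 * n + 2 * k) * n.choose k := by
    rw [← hrefl]
    apply Finset.sum_congr rfl
    intro j hj
    have hj' : j ≤ n := by simpa [Nat.lt_succ_iff] using hj
    simp only [Nat.add_sub_cancel]
    rw [Nat.choose_symm hj']
    have hsign : (-1 : ℤ) ^ (n - j) = (-1 : ℤ) ^ j := by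
      apply neg_one_pow_eq_of_mul_one
      · rw [← pow_add, Nat.sub_add_cancel hj', he.neg_one_pow]
      · rw [← pow_add, Even.neg_one_pow ⟨j, by ring⟩]
    rw [hsign]
    have : ((n - j : ℕ) : ℤ) = (n : ℤ) - j := by
      exact_mod_cast Int.ofNat_sub hj'
    rw [this]
    ring
  have h3 : (∑ k ∈ Finset.range (n + 1), (-1 : ℤ) ^ k * (a - 2 * k) * n.choose k)
        + (∑ k ∈ Finset.range (n + 1), (-1 : ℤ) ^ k * (a - 2 * k) * n.choose k)
      = (2 * a - 2 * n) * ∑ k ∈ Finset.range (n + 1), (-1 : ℤ) ^ k * n.choose k := by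
    nth_rewrite 2 [h2]
    rw [← Finset.sum_add_distrib, Finset.mul_sum]
    apply Finset.sum_congr rfl
    intro j _
    ring
  rw [Int.alternating_sum_range_choose, if_neg hn, mul_zero] at h3
  linarith

/-- For integers `m ≥ 1`, `0 ≤ n₀ ≤ m`, `i₀` even with `0 < i₀ ≤ 2m − n₀`:
`∑_{p=0}^{m} (−1)^p (2m+1−2p) (C(i₀, 2m+1−n₀−p) + C(i₀, p−n₀)) = 0`. -/
theorem stmt_3 (m n₀ i₀ : ℤ) (hm : 1 ≤ m) (hn0 : 0 ≤ n₀) (hnm : n₀ ≤ m)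
    (hieven : Even i₀) (hi1 : 0 < i₀) (hi2 : i₀ ≤ 2 * m - n₀) :
    ∑ p ∈ Finset.Icc (0 : ℤ) m,
        (-1 : ℤ) ^ p.toNat * (2 * m + 1 - 2 * p)
          * (Cz i₀ (2 * m + 1 - n₀ - p) + Cz i₀ (p - n₀)) = 0 := by
  set F : ℤ → ℤ := fun p => (-1 : ℤ) ^ p.toNat * (2 * m + 1 - 2 * p) * Cz i₀ (p - n₀) with hF
  -- Step 1: combine the two Cz terms into a single sum over Icc 0 (2m+1)
  have step1 : ∑ p ∈ Finset.Icc (0 : ℤ) m,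
        (-1 : ℤ) ^ p.toNat * (2 * m + 1 - 2 * p)
          * (Cz i₀ (2 * m + 1 - n₀ - p) + Cz i₀ (p - n₀))
      = ∑ p ∈ Finset.Icc (0 : ℤ) (2 * m + 1), F p := by
    have hsplit : Finset.Icc (0 : ℤ) (2 * m + 1)
        = Finset.Icc (0 : ℤ) m ∪ Finset.Icc (m + 1) (2 * m + 1) := by
      ext x; simp only [Finset.mem_union, Finset.mem_Icc]; omega
    have hdisj : Disjoint (Finset.Icc (0 : ℤ) m) (Finset.Icc (m + 1) (2 * m + 1)) := by
      rw [Finset.disjoint_left]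
      intro x hx hx'
      simp only [Finset.mem_Icc] at hx hx'; omega
    rw [hsplit, Finset.sum_union hdisj]
    have hre : ∑ p ∈ Finset.Icc (m + 1) (2 * m + 1), F p
        = ∑ p ∈ Finset.Icc (0 : ℤ) m,
            (-1 : ℤ) ^ p.toNat * (2 * m + 1 - 2 * p) * Cz i₀ (2 * m + 1 - n₀ - p) := by
      apply Finset.sum_nbij' (fun p => 2 * m + 1 - p) (fun q => 2 * m + 1 - q)
      · intro a ha; simp only [Finset.mem_Icc] at *; omega
      · intro a ha; simp only [Finset.mem_Icc] at *; omega
      · intro a _; ring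
      · intro a _; ring
      · intro p hp
        simp only [Finset.mem_Icc] at hp
        have h1 : (2 * m + 1 - p).toNat + p.toNat = (2 * m + 1).toNat := by omega
        have hsign : (-1 : ℤ) ^ (2 * m + 1 - p).toNat = -(-1 : ℤ) ^ p.toNat := by
          apply neg_one_pow_eq_neg_of_mul_neg_one
          · rw [← pow_add, h1]
            have : (2 * m + 1).toNat = 2 * m.toNat + 1 := by omega
            rw [this, pow_succ, pow_mul]
            simp
          · rw [← pow_add, Even.neg_one_pow ⟨p.toNat, by ring⟩]
        rw [hF]
        simp only []
        rw [hsign]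
        have : 2 * m + 1 - n₀ - (2 * m + 1 - p) = p - n₀ := by ring
        rw [this]
        ring
    rw [hre, ← Finset.sum_add_distrib]
    apply Finset.sum_congr rfl
    intro p _
    rw [hF]; ring
  rw [step1]
  -- Step 2: restrict support to Icc n₀ (n₀ + i₀)
  have step2 : ∑ p ∈ Finset.Icc (0 : ℤ) (2 * m + 1), F p
      = ∑ p ∈ Finset.Icc n₀ (n₀ + i₀), F p := by
    symm
    apply Finset.sum_subset
    · intro x hx; simp only [Finset.mem_Icc] at *; omega
    · intro x hx hx'
      simp only [Finset.mem_Icc] at hx hx'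
      have : Cz i₀ (x - n₀) = 0 := by
        rw [Cz, if_neg]; omega
      rw [hF]; simp only []; rw [this, mul_zero]
  rw [step2]
  -- Step 3: reindex to a natural range
  set N := i₀.toNat with hN
  have hNi : (N : ℤ) = i₀ := Int.toNat_of_nonneg hi1.le
  have step3 : ∑ p ∈ Finset.Icc n₀ (n₀ + i₀), F p
      = ∑ k ∈ Finset.range (N + 1), F (n₀ + k) := by
    apply Finset.sum_nbij' (fun p => (p - n₀).toNat) (fun k => n₀ + (k : ℤ))
    · intro a ha; simp only [Finset.mem_Icc] at ha; simp only [Finset.mem_range]; omega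
    · intro a ha; simp only [Finset.mem_range] at ha; simp only [Finset.mem_Icc]; omega
    · intro a ha; simp only [Finset.mem_Icc] at ha; omega
    · intro a ha; simp only [Finset.mem_range] at ha; omega
    · intro a ha
      simp only [Finset.mem_Icc] at ha
      congr 1
      omega
  rw [step3]
  -- Step 4: evaluate each term and finish with key_alt
  have step4 : ∀ k ∈ Finset.range (N + 1),
      F (n₀ + k) = (-1 : ℤ) ^ n₀.toNat
        * ((-1 : ℤ) ^ k * ((2 * m + 1 - 2 * n₀) - 2 * k) * N.choose k) := by
    intro k hk
    simp only [Finset.mem_range, Nat.lt_succ_iff] at hk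
    rw [hF]
    simp only []
    have h1 : (n₀ + (k : ℤ)).toNat = n₀.toNat + k := by omega
    have h0 : n₀ + (k : ℤ) - n₀ = (k : ℤ) := by ring
    have h2 : Cz i₀ ((k : ℤ)) = N.choose k := by
      rw [Cz, if_pos ⟨Int.natCast_nonneg k, by omega⟩]
      simp [hN]
    rw [h1, h0, h2, pow_add]
    ring
  rw [Finset.sum_congr rfl step4, ← Finset.mul_sum]
  have hNne : N ≠ 0 := by omega
  have hNeven : Even N := by
    obtain ⟨r, hr⟩ := hieven
    exact ⟨r.toNat, by omega⟩
  rw [key_alt N hNne hNeven (2 * m + 1 - 2 * n₀), mul_zero]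
end

section
/- Let k and p be natural numbers, let V be an additive commutative monoid, and let B be a function assigning to each ordered triple of subsets of the set {1,…,k} an element of V. Then ∑_{J ⊆ {1,…,k}, |J| = p} ∑_{(I⁻, I⁰)} ( B(I⁻, I⁰, I⁺) + B(I⁰, I⁻, I⁺) ) = ∑_{n=0}^{p} ∑_{i even, p−n ≤ i ≤ k−n} C(i, p−n) · ( 𝔅(k−n−i, n, i) + 𝔅(n, k−n−i, i) ), where on the left the inner sum is over all pairs (I⁻, I⁰) with I⁰ ⊆ J, I⁻ ⊆ {1,…,k} ∖ J, and such that I⁺ := {1,…,k} ∖ (I⁻ ∪ I⁰) has even cardinality. -/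
open Finset

/-- `Bagg B a b c = ∑ B(P,Q,R)` over all ordered triples `(P,Q,R)` of pairwise disjoint
subsets of `{1,…,k}` with `P ∪ Q ∪ R = {1,…,k}`, `|P| = a`, `|Q| = b`, `|R| = c`. -/
def Bagg {k : ℕ} {V : Type*} [AddCommMonoid V]
    (B : Finset (Fin k) → Finset (Fin k) → Finset (Fin k) → V) (a b c : ℕ) : V :=
  ∑ P ∈ (univ : Finset (Finset (Fin k))).filter (fun P => P.card = a),
    ∑ Q ∈ (univ : Finset (Finset (Fin k))).filter (fun Q => Q.card = b ∧ Disjoint P Q),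
      ∑ R ∈ (univ : Finset (Finset (Fin k))).filter
          (fun R => R.card = c ∧ Disjoint P R ∧ Disjoint Q R ∧ P ∪ Q ∪ R = univ),
        B P Q R

section Aux

variable {k : ℕ} {V : Type*} [AddCommMonoid V]

lemma card_le_k (A : Finset (Fin k)) : A.card ≤ k := by
  simpa using Finset.card_le_univ A

lemma count_J (p : ℕ) (Im I0 : Finset (Fin k)) :
    ((univ : Finset (Finset (Fin k))).filter
        (fun J => J.card = p ∧ Im ⊆ Jᶜ ∧ I0 ⊆ J)).card
      = if Disjoint Im I0 ∧ I0.card ≤ p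
          then ((Im ∪ I0)ᶜ.card).choose (p - I0.card) else 0 := by
  split_ifs with h
  · obtain ⟨hd, hn⟩ := h
    rw [← Finset.card_powersetCard]
    refine Finset.card_bij' (fun J _ => J \ I0) (fun S _ => S ∪ I0) ?_ ?_ ?_ ?_
    · intro J hJ
      simp only [mem_filter, mem_univ, true_and] at hJ
      obtain ⟨h1, h2, h3⟩ := hJ
      rw [Finset.mem_powersetCard]
      constructor
      · intro x hx
        simp only [Finset.mem_sdiff] at hx
        simp only [Finset.mem_compl, Finset.mem_union]
        rintro (hxm | hx0)
        · exact (Finset.mem_compl.1 (h2 hxm)) hx.1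
        · exact hx.2 hx0
      · rw [Finset.card_sdiff_of_subset h3, h1]
    · intro S hS
      rw [Finset.mem_powersetCard] at hS
      obtain ⟨hS1, hS2⟩ := hS
      have hdisj : Disjoint S I0 := by
        rw [Finset.disjoint_left]
        intro x hx hx0
        have := hS1 hx
        simp [Finset.mem_compl, Finset.mem_union] at this
        exact this.2 hx0
      simp only [mem_filter, mem_univ, true_and]
      refine ⟨?_, ?_, Finset.subset_union_right⟩
      · rw [Finset.card_union_of_disjoint hdisj, hS2]
        omega
      · intro x hxm
        simp only [Finset.mem_compl, Finset.mem_union]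
        rintro (hxS | hx0)
        · have := hS1 hxS
          simp [Finset.mem_compl, Finset.mem_union] at this
          exact this.1 hxm
        · exact (Finset.disjoint_left.1 hd) hxm hx0
    · intro J hJ
      simp only [mem_filter, mem_univ, true_and] at hJ
      exact Finset.sdiff_union_of_subset hJ.2.2
    · intro S hS
      rw [Finset.mem_powersetCard] at hS
      have hdisj : Disjoint S I0 := by
        rw [Finset.disjoint_left]
        intro x hx hx0
        have := hS.1 hx
        simp [Finset.mem_compl, Finset.mem_union] at this
        exact this.2 hx0
      exact Finset.union_sdiff_cancel_right hdisj
  · rw [Finset.card_eq_zero, Finset.filter_eq_empty_iff]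
    intro J _
    rintro ⟨h1, h2, h3⟩
    apply h
    constructor
    · rw [Finset.disjoint_left]
      intro x hxm hx0
      exact (Finset.mem_compl.1 (h2 hxm)) (h3 hx0)
    · calc I0.card ≤ J.card := Finset.card_le_card h3
        _ = p := h1

variable (B : Finset (Fin k) → Finset (Fin k) → Finset (Fin k) → V)

lemma bagg_eq (a b c : ℕ) :
    Bagg B a b c
      = ∑ P ∈ (univ : Finset (Finset (Fin k))).filter (fun P => P.card = a),
          ∑ Q ∈ (univ : Finset (Finset (Fin k))).filter (fun Q => Q.card = b ∧ Disjoint P Q),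
            if (P ∪ Q)ᶜ.card = c then B P Q (P ∪ Q)ᶜ else 0 := by
  unfold Bagg
  refine Finset.sum_congr rfl fun P hP => Finset.sum_congr rfl fun Q hQ => ?_
  simp only [mem_filter, mem_univ, true_and] at hP hQ
  obtain ⟨hQb, hPQ⟩ := hQ
  have hset : (univ : Finset (Finset (Fin k))).filter
      (fun R => R.card = c ∧ Disjoint P R ∧ Disjoint Q R ∧ P ∪ Q ∪ R = univ)
      = if (P ∪ Q)ᶜ.card = c then {(P ∪ Q)ᶜ} else ∅ := by
    ext R
    split_ifs with hc
    · simp only [mem_filter, mem_univ, true_and, mem_singleton]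
      constructor
      · rintro ⟨h1, h2, h3, h4⟩
        apply Finset.Subset.antisymm
        · intro x hx
          simp only [Finset.mem_compl, Finset.mem_union]
          push_neg
          exact ⟨Finset.disjoint_right.1 h2 hx, Finset.disjoint_right.1 h3 hx⟩
        · intro x hx
          have hxu : x ∈ P ∪ Q ∪ R := h4 ▸ Finset.mem_univ x
          simp only [Finset.mem_compl, Finset.mem_union] at hx hxu
          tauto
      · rintro rfl
        refine ⟨hc, ?_, ?_, ?_⟩
        · exact Disjoint.mono_left Finset.subset_union_left disjoint_compl_right
        · exact Disjoint.mono_left Finset.subset_union_right disjoint_compl_right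
        · exact Finset.union_compl _
    · simp only [mem_filter, mem_univ, true_and, Finset.notMem_empty, iff_false]
      rintro ⟨h1, h2, h3, h4⟩
      apply hc
      have hR : R = (P ∪ Q)ᶜ := by
        apply Finset.Subset.antisymm
        · intro x hx
          simp only [Finset.mem_compl, Finset.mem_union]
          push_neg
          exact ⟨Finset.disjoint_right.1 h2 hx, Finset.disjoint_right.1 h3 hx⟩
        · intro x hx
          have hxu : x ∈ P ∪ Q ∪ R := h4 ▸ Finset.mem_univ x
          simp only [Finset.mem_compl, Finset.mem_union] at hx hxu
          tauto
      rw [← hR, h1]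
  rw [hset]
  split_ifs with hc
  · rw [Finset.sum_singleton]
  · rw [Finset.sum_empty]

/-- pairs `(P, Q)` with `|P| = a`, `|Q| = b`, disjoint, and `|(P ∪ Q)ᶜ| = c`. -/
def pairSet (k : ℕ) (a b c : ℕ) : Finset (Finset (Fin k) × Finset (Fin k)) :=
  ((univ : Finset (Finset (Fin k))) ×ˢ (univ : Finset (Finset (Fin k)))).filter
    (fun q => q.1.card = a ∧ q.2.card = b ∧ Disjoint q.1 q.2 ∧ (q.1 ∪ q.2)ᶜ.card = c)

lemma bagg_eq_pair (a b c : ℕ) :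
    Bagg B a b c = ∑ q ∈ pairSet k a b c, B q.1 q.2 (q.1 ∪ q.2)ᶜ := by
  rw [bagg_eq]
  conv_rhs => rw [pairSet, Finset.sum_filter, Finset.sum_product]
  simp only [Finset.sum_filter]
  refine Finset.sum_congr rfl fun P _ => ?_
  by_cases hP : P.card = a
  · simp only [hP, if_true, true_and]
    refine Finset.sum_congr rfl fun Q _ => ?_
    split_ifs with h1 h2 h3 <;> tauto
  · simp [hP]

lemma bagg_eq_pair_swap (a b c : ℕ) :
    Bagg B a b c = ∑ q ∈ pairSet k b a c, B q.2 q.1 (q.1 ∪ q.2)ᶜ := by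
  rw [bagg_eq_pair]
  refine Finset.sum_nbij' Prod.swap Prod.swap ?_ ?_ ?_ ?_ ?_
  · intro q hq
    simp only [pairSet, mem_filter, mem_product, mem_univ, true_and, and_true] at hq ⊢
    obtain ⟨h1, h2, h3, h4⟩ := hq
    exact ⟨h2, h1, h3.symm, by rwa [Finset.union_comm]⟩
  · intro q hq
    simp only [pairSet, mem_filter, mem_product, mem_univ, true_and, and_true] at hq ⊢
    obtain ⟨h1, h2, h3, h4⟩ := hq
    exact ⟨h2, h1, h3.symm, by rwa [Finset.union_comm]⟩
  · intro q _; exact Prod.swap_swap q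
  · intro q _; exact Prod.swap_swap q
  · intro q _
    simp only [Prod.fst_swap, Prod.snd_swap]
    rw [Finset.union_comm]

lemma pairSet_eq_empty {a b c : ℕ} (h : a + b + c ≠ k) : pairSet k a b c = ∅ := by
  rw [Finset.eq_empty_iff_forall_notMem]
  intro q hq
  simp only [pairSet, mem_filter, mem_product, mem_univ, true_and, and_true] at hq
  obtain ⟨h1, h2, h3, h4⟩ := hq
  have hu : (q.1 ∪ q.2).card = a + b := by
    rw [Finset.card_union_of_disjoint h3, h1, h2]
  have hle : (q.1 ∪ q.2).card ≤ k := card_le_k _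
  have hcc : (q.1 ∪ q.2)ᶜ.card = k - (q.1 ∪ q.2).card := by
    rw [Finset.card_compl, Fintype.card_fin]
  omega

lemma key_card {q : Finset (Fin k) × Finset (Fin k)} (hd : Disjoint q.1 q.2) :
    q.1.card + q.2.card + (q.1 ∪ q.2)ᶜ.card = k := by
  have h1 : (q.1 ∪ q.2).card = q.1.card + q.2.card := Finset.card_union_of_disjoint hd
  have h2 : (q.1 ∪ q.2)ᶜ.card = k - (q.1 ∪ q.2).card := by
    rw [Finset.card_compl, Fintype.card_fin]
  have h3 : (q.1 ∪ q.2).card ≤ k := card_le_k _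
  omega

/-- the summand with the `J`-condition as an `if`. -/
def Gfun (B : Finset (Fin k) → Finset (Fin k) → Finset (Fin k) → V) (p : ℕ)
    (J : Finset (Fin k)) (q : Finset (Fin k) × Finset (Fin k)) : V :=
  if J.card = p ∧ q.1 ⊆ Jᶜ ∧ q.2 ⊆ J ∧ Even ((q.1 ∪ q.2)ᶜ.card)
    then B q.1 q.2 (q.1 ∪ q.2)ᶜ + B q.2 q.1 (q.1 ∪ q.2)ᶜ else 0

end Aux

/-- Grouping the summands with `|J| = p` and `|I⁺|` even gives `T(k,p)`. -/
theorem stmt_5 (k p : ℕ) (V : Type*) [AddCommMonoid V]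
    (B : Finset (Fin k) → Finset (Fin k) → Finset (Fin k) → V) :
    (∑ J ∈ (univ : Finset (Finset (Fin k))).filter (fun J => J.card = p),
      ∑ Im ∈ (univ : Finset (Finset (Fin k))).filter (fun Im => Im ⊆ Jᶜ),
        ∑ I0 ∈ (univ : Finset (Finset (Fin k))).filter
            (fun I0 => I0 ⊆ J ∧ Even ((Im ∪ I0)ᶜ.card)),
          (B Im I0 (Im ∪ I0)ᶜ + B I0 Im (Im ∪ I0)ᶜ))
      = ∑ n ∈ Finset.range (p + 1),
          ∑ i ∈ (Finset.range (k - n + 1)).filter (fun i => p - n ≤ i ∧ Even i),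
            (i.choose (p - n)) • (Bagg B (k - n - i) n i + Bagg B n (k - n - i) i) := by
  classical
  set f : Finset (Fin k) × Finset (Fin k) → V :=
    fun q => B q.1 q.2 (q.1 ∪ q.2)ᶜ + B q.2 q.1 (q.1 ∪ q.2)ᶜ with hf
  set s : Finset (Finset (Fin k) × Finset (Fin k)) :=
    ((univ : Finset (Finset (Fin k))) ×ˢ (univ : Finset (Finset (Fin k)))).filter
      (fun q => Disjoint q.1 q.2 ∧ Even ((q.1 ∪ q.2)ᶜ.card) ∧ q.2.card ≤ p) with hs
  -- Step 1 : LHS = ∑ q ∈ s, choose • f q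
  have step1 : (∑ J ∈ (univ : Finset (Finset (Fin k))).filter (fun J => J.card = p),
      ∑ Im ∈ (univ : Finset (Finset (Fin k))).filter (fun Im => Im ⊆ Jᶜ),
        ∑ I0 ∈ (univ : Finset (Finset (Fin k))).filter
            (fun I0 => I0 ⊆ J ∧ Even ((Im ∪ I0)ᶜ.card)),
          (B Im I0 (Im ∪ I0)ᶜ + B I0 Im (Im ∪ I0)ᶜ))
      = ∑ q ∈ s, (((q.1 ∪ q.2)ᶜ.card).choose (p - q.2.card)) • f q := by
    have e1 : (∑ J ∈ (univ : Finset (Finset (Fin k))).filter (fun J => J.card = p),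
        ∑ Im ∈ (univ : Finset (Finset (Fin k))).filter (fun Im => Im ⊆ Jᶜ),
          ∑ I0 ∈ (univ : Finset (Finset (Fin k))).filter
              (fun I0 => I0 ⊆ J ∧ Even ((Im ∪ I0)ᶜ.card)),
            (B Im I0 (Im ∪ I0)ᶜ + B I0 Im (Im ∪ I0)ᶜ))
        = ∑ J ∈ (univ : Finset (Finset (Fin k))),
            ∑ q ∈ ((univ : Finset (Finset (Fin k))) ×ˢ (univ : Finset (Finset (Fin k)))),
              Gfun B p J q := by
      rw [Finset.sum_filter]
      refine Finset.sum_congr rfl fun J _ => ?_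
      rw [Finset.sum_product]
      by_cases hJ : J.card = p
      · rw [if_pos hJ, Finset.sum_filter]
        refine Finset.sum_congr rfl fun Im _ => ?_
        by_cases hIm : Im ⊆ Jᶜ
        · rw [if_pos hIm, Finset.sum_filter]
          refine Finset.sum_congr rfl fun I0 _ => ?_
          simp [Gfun, hJ, hIm, and_assoc]
        · rw [if_neg hIm]
          symm
          apply Finset.sum_eq_zero
          intro I0 _
          simp [Gfun, hIm]
      · rw [if_neg hJ]
        symm
        apply Finset.sum_eq_zero
        intro Im _
        apply Finset.sum_eq_zero
        intro I0 _
        simp [Gfun, hJ]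
    have e3 : ∀ q : Finset (Fin k) × Finset (Fin k),
        (∑ J ∈ (univ : Finset (Finset (Fin k))), Gfun B p J q)
          = if Disjoint q.1 q.2 ∧ Even ((q.1 ∪ q.2)ᶜ.card) ∧ q.2.card ≤ p
              then (((q.1 ∪ q.2)ᶜ.card).choose (p - q.2.card)) • f q else 0 := by
      intro q
      by_cases hE : Even ((q.1 ∪ q.2)ᶜ.card)
      · have hG : ∀ J : Finset (Fin k), Gfun B p J q
            = if J.card = p ∧ q.1 ⊆ Jᶜ ∧ q.2 ⊆ J then f q else 0 := by
          intro J
          simp only [Gfun, hE, and_true, hf]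
        simp only [hG]
        rw [← Finset.sum_filter, Finset.sum_const, count_J]
        by_cases hD : Disjoint q.1 q.2 ∧ q.2.card ≤ p
        · rw [if_pos hD, if_pos ⟨hD.1, hE, hD.2⟩]
        · rw [if_neg hD, zero_smul, if_neg (by tauto)]
      · rw [if_neg (by tauto)]
        apply Finset.sum_eq_zero
        intro J _
        simp only [Gfun, hE, and_false, if_false]
    rw [e1, Finset.sum_comm]
    simp only [e3]
    rw [← Finset.sum_filter]
  rw [step1]
  -- Step 2 : rewrite the RHS inner sums
  have hterm : ∀ n i : ℕ,
      Bagg B (k - n - i) n i + Bagg B n (k - n - i) i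
        = ∑ q ∈ pairSet k (k - n - i) n i, f q := by
    intro n i
    rw [bagg_eq_pair, bagg_eq_pair_swap B n (k - n - i) i, ← Finset.sum_add_distrib]
  have hinner : ∀ n ∈ Finset.range (p + 1),
      (∑ i ∈ (Finset.range (k - n + 1)).filter (fun i => p - n ≤ i ∧ Even i),
        (i.choose (p - n)) • (Bagg B (k - n - i) n i + Bagg B n (k - n - i) i))
      = ∑ i ∈ (Finset.range (k + 1)).filter (fun i => Even i),
          (i.choose (p - n)) • ∑ q ∈ pairSet k (k - n - i) n i, f q := by
    intro n _
    simp only [hterm]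
    apply Finset.sum_subset
    · intro i hi
      simp only [mem_filter, Finset.mem_range] at hi ⊢
      exact ⟨by omega, hi.2.2⟩
    · intro i hi hni
      simp only [mem_filter, Finset.mem_range] at hi hni
      by_cases hch : p - n ≤ i
      · have hik : k - n < i := by
          by_contra hcon
          exact hni ⟨by omega, hch, hi.2⟩
        rw [pairSet_eq_empty (by omega), Finset.sum_empty, smul_zero]
      · rw [Nat.choose_eq_zero_of_lt (by omega), zero_smul]
  rw [Finset.sum_congr rfl hinner, ← Finset.sum_product']
  -- Step 3 : fiberwise decomposition of the sum over s
  have hmaps : ∀ q ∈ s, ((q.2.card, (q.1 ∪ q.2)ᶜ.card) : ℕ × ℕ)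
      ∈ (Finset.range (p + 1)) ×ˢ ((Finset.range (k + 1)).filter (fun i => Even i)) := by
    intro q hq
    simp only [hs, mem_filter, mem_product, mem_univ, true_and] at hq
    obtain ⟨hd, hE, hle⟩ := hq
    simp only [mem_product, mem_filter, Finset.mem_range]
    exact ⟨by omega, ⟨by have := card_le_k (q.1 ∪ q.2)ᶜ; omega, hE⟩⟩
  rw [← Finset.sum_fiberwise_of_maps_to hmaps
      (fun q => (((q.1 ∪ q.2)ᶜ.card).choose (p - q.2.card)) • f q)]
  -- Step 4 : identify the fibers
  refine Finset.sum_congr rfl fun y hy => ?_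
  obtain ⟨n, i⟩ := y
  simp only [mem_product, mem_filter, Finset.mem_range] at hy
  have hn := hy.1
  have hik := hy.2.1
  have hie := hy.2.2
  have hset : s.filter (fun q => ((q.2.card, (q.1 ∪ q.2)ᶜ.card) : ℕ × ℕ) = (n, i))
      = pairSet k (k - n - i) n i := by
    ext q
    simp only [hs, pairSet, mem_filter, mem_product, mem_univ, true_and, Prod.mk.injEq]
    constructor
    · rintro ⟨⟨hd, hE, hle⟩, h2, hc⟩
      have hk := key_card hd
      exact ⟨by omega, h2, hd, hc⟩
    · rintro ⟨h1, h2, hd, hc⟩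
      exact ⟨⟨hd, by rw [hc]; exact hie, by omega⟩, h2, hc⟩
  rw [hset, Finset.smul_sum]
  refine Finset.sum_congr rfl fun q hq => ?_
  simp only [pairSet, mem_filter, mem_product, mem_univ, true_and] at hq
  rw [hq.2.2.2, hq.2.1]
end

section
/- For every integer k ≥ 1, let D_k be the ℂ-linear endomorphism of ℂ[X] defined by D_k(f) = f' + k·X^{k−1}·f. Then the range of D_k and the ℂ-linear span of the monomials {X^a : 0 ≤ a ≤ k−2} are complementary subspaces of ℂ[X]: their intersection is {0} and their sum is all of ℂ[X]. Consequently, the quotient vector space ℂ[X] / range(D_k) has dimension k − 1, with the images of 1, X, …, X^{k−2} forming a basis. -/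
/-!
For `f ≠ 0` the term `k X^(k-1) f` dominates `f'`, so `D_k` raises degrees by exactly `k - 1`:
its range meets the polynomials of degree `< k - 1` only in `0`. Conversely
`X^(m + k - 1) = k⁻¹ (D_k(X^m) - m X^(m-1))`, so by induction on the degree every monomial lies
in `range D_k + ℂ[X]_(k-1)`. The quotient by `range D_k` is then isomorphic to the complement
`ℂ[X]_(k-1)`, whose monomial basis gives the classes of `1, X, …, X^(k-2)`.
-/

/-- The twisted de Rham differential `D_k : f ↦ f' + k·X^{k−1}·f` on `ℂ[X]`. -/
noncomputable def Dk (k : ℕ) : Polynomial ℂ →ₗ[ℂ] Polynomial ℂ :=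
  Polynomial.derivative + (k : ℂ) • LinearMap.mulLeft ℂ (Polynomial.X ^ (k - 1))

open Polynomial

theorem Dk_apply (k : ℕ) (f : ℂ[X]) : Dk k f = derivative f + (k : ℂ) • (X ^ (k - 1) * f) := rfl

theorem degree_Dk {k : ℕ} (hk : 1 ≤ k) {f : ℂ[X]} (hf : f ≠ 0) :
    (Dk k f).degree = (X ^ (k - 1) * f).degree := by
  have hk₀ : (k : ℂ) ≠ 0 := Nat.cast_ne_zero.2 (by omega)
  have hlt : (derivative f).degree < ((k : ℂ) • (X ^ (k - 1) * f)).degree := by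
    rw [degree_smul_of_smul_regular _ (IsSMulRegular.of_ne_zero hk₀), mul_comm]
    exact (degree_derivative_lt hf).trans_le (degree_le_mul_left f (pow_ne_zero _ X_ne_zero))
  rw [Dk_apply, degree_add_eq_right_of_degree_lt hlt,
    degree_smul_of_smul_regular _ (IsSMulRegular.of_ne_zero hk₀)]

theorem disjoint_range_Dk_degreeLT {k : ℕ} (hk : 1 ≤ k) :
    Disjoint (LinearMap.range (Dk k)) (degreeLT ℂ (k - 1)) := by
  rw [Submodule.disjoint_def]
  rintro _ ⟨f, rfl⟩ hlt
  by_contra hDf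
  have hf : f ≠ 0 := by rintro rfl; exact hDf (map_zero _)
  have hge : ((k - 1 : ℕ) : WithBot ℕ) ≤ (Dk k f).degree := by
    rw [degree_Dk hk hf, ← degree_X_pow (R := ℂ)]
    exact degree_le_mul_left _ hf
  exact (mem_degreeLT.1 hlt).not_ge hge

theorem X_pow_mem_range_Dk_sup_degreeLT {k : ℕ} (hk : 1 ≤ k) (d : ℕ) :
    X ^ d ∈ LinearMap.range (Dk k) ⊔ degreeLT ℂ (k - 1) := by
  induction d using Nat.strong_induction_on with
  | _ d ih =>
  rcases lt_or_ge d (k - 1) with hd | hd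
  · exact Submodule.mem_sup_right (mem_degreeLT.2 (by rw [degree_X_pow]; exact_mod_cast hd))
  obtain ⟨m, rfl⟩ := Nat.exists_eq_add_of_le' hd
  have hderiv : derivative (X ^ m : ℂ[X]) ∈ LinearMap.range (Dk k) ⊔ degreeLT ℂ (k - 1) := by
    rcases m.eq_zero_or_pos with rfl | hm
    · simp
    rw [derivative_X_pow, ← smul_eq_C_mul]
    exact Submodule.smul_mem _ _ (ih _ (by omega))
  have hX : X ^ (m + (k - 1)) = (k : ℂ)⁻¹ • (Dk k (X ^ m) - derivative (X ^ m)) := by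
    rw [Dk_apply, add_sub_cancel_left, smul_smul,
      inv_mul_cancel₀ (Nat.cast_ne_zero.2 (by omega)), one_smul, ← pow_add, add_comm]
  rw [hX]
  exact Submodule.smul_mem _ _
    (Submodule.sub_mem _ (Submodule.mem_sup_left ⟨X ^ m, rfl⟩) hderiv)

theorem codisjoint_range_Dk_degreeLT {k : ℕ} (hk : 1 ≤ k) :
    Codisjoint (LinearMap.range (Dk k)) (degreeLT ℂ (k - 1)) := by
  rw [codisjoint_iff, eq_top_iff, ← (basisMonomials ℂ).span_eq, Submodule.span_le]
  rintro _ ⟨d, rfl⟩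
  simpa [coe_basisMonomials, monomial_one_right_eq_X_pow] using
    X_pow_mem_range_Dk_sup_degreeLT hk d

theorem isCompl_range_Dk_degreeLT {k : ℕ} (hk : 1 ≤ k) :
    IsCompl (LinearMap.range (Dk k)) (degreeLT ℂ (k - 1)) :=
  ⟨disjoint_range_Dk_degreeLT hk, codisjoint_range_Dk_degreeLT hk⟩

namespace Polynomial

variable {R : Type*} [Ring R] {n : ℕ} {p : Submodule R R[X]}

noncomputable def quotientBasisOfIsComplDegreeLT (h : IsCompl p (degreeLT R n)) :
    Module.Basis (Fin n) R (R[X] ⧸ p) :=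
  (degreeLT.basis R n).map (p.quotientEquivOfIsCompl _ h).symm

theorem quotientBasisOfIsComplDegreeLT_apply (h : IsCompl p (degreeLT R n)) (i : Fin n) :
    quotientBasisOfIsComplDegreeLT h i = Submodule.Quotient.mk (X ^ (i : ℕ)) := by
  simp [quotientBasisOfIsComplDegreeLT]

theorem span_X_pow_add_two_le_eq_degreeLT (R : Type*) [Semiring R] (k : ℕ) :
    Submodule.span R {f : R[X] | ∃ a : ℕ, a + 2 ≤ k ∧ f = X ^ a} = degreeLT R (k - 1) := by
  classical
  rw [degreeLT_eq_span_X_pow]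
  congr 1
  ext f
  simp only [Set.mem_ofPred_eq, Finset.coe_image, Finset.coe_range, Set.mem_image, Set.mem_Iio]
  exact ⟨fun ⟨a, ha, hf⟩ => ⟨a, by omega, hf.symm⟩, fun ⟨a, ha, hf⟩ => ⟨a, by omega, hf.symm⟩⟩

end Polynomial

/-- For `k ≥ 1`, the range of `D_k` and the span of `{X^a : 0 ≤ a ≤ k−2}` are
complementary subspaces of `ℂ[X]`, and the quotient `ℂ[X]/range(D_k)` has dimension
`k − 1` with the images of `1, X, …, X^{k−2}` forming a basis. -/
theorem stmt_7 (k : ℕ) (hk : 1 ≤ k) :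
    (LinearMap.range (Dk k) ⊓
        Submodule.span ℂ {f : Polynomial ℂ | ∃ a : ℕ, a + 2 ≤ k ∧ f = Polynomial.X ^ a} = ⊥) ∧
    (LinearMap.range (Dk k) ⊔
        Submodule.span ℂ {f : Polynomial ℂ | ∃ a : ℕ, a + 2 ≤ k ∧ f = Polynomial.X ^ a} = ⊤) ∧
    Module.finrank ℂ (Polynomial ℂ ⧸ LinearMap.range (Dk k)) = k - 1 ∧
    ∃ b : Module.Basis (Fin (k - 1)) ℂ (Polynomial ℂ ⧸ LinearMap.range (Dk k)),
      ∀ i : Fin (k - 1), b i = Submodule.Quotient.mk (Polynomial.X ^ (i : ℕ)) := by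
  have h := isCompl_range_Dk_degreeLT hk
  rw [span_X_pow_add_two_le_eq_degreeLT]
  refine ⟨h.inf_eq_bot, h.sup_eq_top, ?_, _, quotientBasisOfIsComplDegreeLT_apply h⟩
  rw [Module.finrank_eq_card_basis (quotientBasisOfIsComplDegreeLT h), Fintype.card_fin]
end

section
/- Let E be a finite-dimensional real inner product space, let Δ ⊆ E be a compact convex set with 0 in its interior, and let r > 0 be a real number. Work in the product inner product space E × ℝ with pairing ⟪(x,s),(y,t)⟫ = ⟪x,y⟫ + s·t. Then ( convexHull( (r • Δ^∘) × {1} ∪ {(0, −1)} ) )^∘ = convexHull( ((2/r) • Δ) × {1} ∪ {(0, −1)} ), where for a subset S of an inner product space, S^∘ := { y : ⟪x, y⟫ ≥ −1 for all x ∈ S }. -/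
open Pointwise

/-- The (negative-convention) polar of a subset of a real inner product space:
`S^∘ = { y | ⟪x, y⟫ ≥ −1 for all x ∈ S }`. -/
def npolar {F : Type*} [NormedAddCommGroup F] [InnerProductSpace ℝ F] (S : Set F) : Set F :=
  {y | ∀ x ∈ S, (-1 : ℝ) ≤ @inner ℝ _ _ x y}

/-- The (negative-convention) polar of a subset of `E × ℝ` with respect to the product
pairing `⟪(x,s),(y,t)⟫ = ⟪x,y⟫ + s·t`. -/
def npolarProd {E : Type*} [NormedAddCommGroup E] [InnerProductSpace ℝ E]
    (S : Set (E × ℝ)) : Set (E × ℝ) :=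
  {q | ∀ p ∈ S, (-1 : ℝ) ≤ @inner ℝ _ _ p.1 q.1 + p.2 * q.2}

section Aux

open RealInnerProductSpace

variable {E : Type*} [NormedAddCommGroup E] [InnerProductSpace ℝ E]

lemma convex_npolarProd (S : Set (E × ℝ)) : Convex ℝ (npolarProd S) := by
  intro q₁ hq₁ q₂ hq₂ a b ha hb hab p hp
  have h1 := hq₁ p hp
  have h2 := hq₂ p hp
  simp only [Prod.fst_add, Prod.snd_add, Prod.smul_fst, Prod.smul_snd, smul_eq_mul,
    inner_add_right, real_inner_smul_right]
  nlinarith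

lemma npolarProd_convexHull (S : Set (E × ℝ)) :
    npolarProd (convexHull ℝ S) = npolarProd S := by
  ext q
  constructor
  · intro h p hp; exact h p (subset_convexHull ℝ S hp)
  · intro h p hp
    have hC : Convex ℝ {p : E × ℝ | (-1 : ℝ) ≤ ⟪p.1, q.1⟫ + p.2 * q.2} := by
      intro p₁ hp₁ p₂ hp₂ a b ha hb hab
      simp only [Set.mem_setOf_eq, Prod.fst_add, Prod.snd_add, Prod.smul_fst, Prod.smul_snd,
        smul_eq_mul, inner_add_left, real_inner_smul_left] at *
      nlinarith
    exact convexHull_min h hC hp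

lemma npolar_npolar [FiniteDimensional ℝ E] {Δ : Set E} (hc : IsCompact Δ)
    (hconv : Convex ℝ Δ) (h0 : (0 : E) ∈ Δ) : npolar (npolar Δ) = Δ := by
  apply Set.Subset.antisymm
  · intro y hy
    by_contra hyΔ
    obtain ⟨f, u, hfs, hfy⟩ := geometric_hahn_banach_closed_point hconv hc.isClosed hyΔ
    have hu : (0 : ℝ) < u := by have := hfs 0 h0; simpa using this
    set z := (InnerProductSpace.toDual ℝ E).symm f with hz
    have hzf : ∀ w, ⟪z, w⟫ = f w := fun w => InnerProductSpace.toDual_symm_apply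
    have hx₀ : (-(1 / u)) • z ∈ npolar Δ := by
      intro x hx
      have hfx := hfs x hx
      rw [real_inner_smul_right, real_inner_comm, hzf]
      have h1 : (-(1 / u)) * f x = -(f x / u) := by ring
      rw [h1, neg_le_neg_iff, div_le_one hu]
      exact hfx.le
    have h2 := hy _ hx₀
    rw [real_inner_smul_left, hzf] at h2
    have h3 : (-(1 / u)) * f y < -1 := by
      rw [neg_mul, neg_lt_neg_iff, one_div, ← div_eq_inv_mul]
      exact (one_lt_div hu).2 hfy
    linarith
  · intro x hx k hk
    rw [real_inner_comm]
    exact hk x hx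

lemma eq_zero_of_nonneg_on_npolar {Δ : Set E} (hc : IsCompact Δ) {y : E}
    (hy : ∀ k ∈ npolar Δ, (0 : ℝ) ≤ ⟪k, y⟫) : y = 0 := by
  by_contra hy0
  obtain ⟨R, hR⟩ := (Metric.isBounded_iff_subset_closedBall (0 : E)).1 hc.isBounded
  set R' : ℝ := max R 1 with hR'
  have hR'pos : (0 : ℝ) < R' := lt_of_lt_of_le one_pos (le_max_right _ _)
  have hny : (0 : ℝ) < ‖y‖ := norm_pos_iff.2 hy0
  have hk : (-(1 / (R' * ‖y‖))) • y ∈ npolar Δ := by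
    intro x hx
    rw [real_inner_smul_right]
    have h1 : ⟪x, y⟫ ≤ ‖x‖ * ‖y‖ := real_inner_le_norm x y
    have h2 : ‖x‖ ≤ R' := le_trans (by simpa using hR hx) (le_max_left _ _)
    have h3 : ‖x‖ * ‖y‖ ≤ R' * ‖y‖ := by nlinarith
    have key : (1 / (R' * ‖y‖)) * ⟪x, y⟫ ≤ 1 := by
      rw [one_div, ← div_eq_inv_mul, div_le_one (by positivity)]
      nlinarith
    rw [neg_mul]
    linarith
  have h4 := hy _ hk
  rw [real_inner_smul_left, real_inner_self_eq_norm_mul_norm] at h4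
  have : (0 : ℝ) < (1 / (R' * ‖y‖)) * (‖y‖ * ‖y‖) := by positivity
  nlinarith

end Aux

/-- Polar duality for suspended convex bodies:
`(Conv((r • Δ^∘) × {1} ∪ {(0,−1)}))^∘ = Conv(((2/r) • Δ) × {1} ∪ {(0,−1)})`. -/
theorem stmt_8 (E : Type*) [NormedAddCommGroup E] [InnerProductSpace ℝ E]
    [FiniteDimensional ℝ E] (Δ : Set E) (hc : IsCompact Δ) (hconv : Convex ℝ Δ)
    (h0 : (0 : E) ∈ interior Δ) (r : ℝ) (hr : 0 < r) :
    npolarProd (convexHull ℝ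
        ((fun a => (a, (1 : ℝ))) '' (r • npolar Δ) ∪ {((0 : E), (-1 : ℝ))}))
      = convexHull ℝ
          ((fun a => (a, (1 : ℝ))) '' ((2 / r) • Δ) ∪ {((0 : E), (-1 : ℝ))}) := by
  have h0Δ : (0 : E) ∈ Δ := interior_subset h0
  rw [npolarProd_convexHull]
  apply Set.Subset.antisymm
  · -- ⊆ : every point of the polar lies in the hull
    rintro ⟨y, t⟩ hq
    have h0K : (0 : E) ∈ npolar Δ := by
      intro x hx; simp [inner_zero_right]
    have hK : ∀ k ∈ npolar Δ, (-1 : ℝ) ≤ r * (@inner ℝ _ _ k y) + t := by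
      intro k hk
      have := hq (r • k, 1) (Or.inl ⟨r • k, Set.smul_mem_smul_set hk, rfl⟩)
      simpa [real_inner_smul_left] using this
    have ht1 : t ≤ 1 := by
      have := hq ((0 : E), (-1 : ℝ)) (Or.inr rfl)
      simp only [inner_zero_left] at this
      linarith
    have htm1 : (-1 : ℝ) ≤ t := by
      have := hK 0 h0K
      simp only [inner_zero_left] at this
      linarith
    rcases eq_or_lt_of_le htm1 with hteq | htlt
    · -- t = -1 forces y = 0
      have hy0 : y = 0 := by
        apply eq_zero_of_nonneg_on_npolar hc
        intro k hk
        have h1 := hK k hk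
        have h2 : (0 : ℝ) ≤ r * (@inner ℝ _ _ k y) := by linarith [hteq ▸ h1]
        nlinarith
      refine subset_convexHull ℝ _ (Or.inr ?_)
      simp [hy0, ← hteq]
    · -- t > -1 : write the point as a convex combination
      have ht0 : (0 : ℝ) < 1 + t := by linarith
      set w : E := (r / (1 + t)) • y with hw
      have hwΔ : w ∈ Δ := by
        rw [← npolar_npolar hc hconv h0Δ]
        intro k hk
        rw [hw, real_inner_smul_right, div_mul_eq_mul_div, le_div_iff₀ ht0]
        have := hK k hk
        nlinarith
      set lam : ℝ := (1 + t) / 2 with hlam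
      have hp₁ : ((2 / r) • w, (1 : ℝ)) ∈
          (fun a => (a, (1 : ℝ))) '' ((2 / r) • Δ) ∪ {((0 : E), (-1 : ℝ))} :=
        Or.inl ⟨(2 / r) • w, Set.smul_mem_smul_set hwΔ, rfl⟩
      have hp₂ : ((0 : E), (-1 : ℝ)) ∈
          (fun a => (a, (1 : ℝ))) '' ((2 / r) • Δ) ∪ {((0 : E), (-1 : ℝ))} := Or.inr rfl
      have hmem := (convex_convexHull ℝ _)
        (subset_convexHull ℝ _ hp₁) (subset_convexHull ℝ _ hp₂)
        (a := lam) (b := 1 - lam) (by rw [hlam]; linarith) (by rw [hlam]; linarith)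
        (by ring)
      have heq : lam • (((2 / r) • w, (1 : ℝ)) : E × ℝ)
          + (1 - lam) • (((0 : E), (-1 : ℝ)) : E × ℝ) = (y, t) := by
        have hr' : r ≠ 0 := ne_of_gt hr
        have ht' : (1 + t) ≠ 0 := ne_of_gt ht0
        refine Prod.ext ?_ ?_
        · show lam • ((2 / r) • w) + (1 - lam) • (0 : E) = y
          rw [smul_zero, add_zero, hw, smul_smul, smul_smul, hlam]
          rw [show (1 + t) / 2 * (2 / r) * (r / (1 + t)) = 1 by field_simp]
          exact one_smul ℝ y
        · show lam * 1 + (1 - lam) * (-1) = t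
          rw [hlam]; ring
      rw [← heq]
      exact hmem
  · -- ⊇ : the hull is contained in the polar
    apply convexHull_min _ (convex_npolarProd _)
    rintro q (⟨a, ⟨d, hd, rfl⟩, rfl⟩ | hq)
    · rintro p (⟨b, ⟨k, hk, rfl⟩, rfl⟩ | hp)
      · simp only [real_inner_smul_left, real_inner_smul_right, one_mul]
        have h1 : (-1 : ℝ) ≤ @inner ℝ _ _ d k := hk d hd
        have h2 : @inner ℝ _ _ k d = @inner ℝ _ _ d k := real_inner_comm d k
        have h3 : (2 / r) * (r * @inner ℝ _ _ d k) = 2 * @inner ℝ _ _ d k := by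
          field_simp
        rw [h2]
        linarith
      · rcases hp with rfl
        simp [inner_zero_left]
    · rcases hq with rfl
      rintro p (⟨b, ⟨k, hk, rfl⟩, rfl⟩ | hp)
      · simp [inner_zero_right]
      · rcases hp with rfl
        norm_num [inner_zero_left]
end

section
/- Let Δ̌ ⊆ ℝ^d be a compact convex set with 0 in its interior, and suppose that the origin is the only point of the integer lattice ℤ^d lying in the interior of Δ̌. Then for every real number r with 0 < r ≤ 2, the origin is the only point of the integer lattice ℤ^{d+1} lying in the interior (in ℝ^d × ℝ) of convexHull( ((r • Δ̌) × {1}) ∪ {(0, −1)} ). -/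
open Pointwise

/-- If the origin is the unique interior lattice point of a compact convex body
`Δ̌ ⊆ ℝ^d` containing `0` in its interior, then for every `0 < r ≤ 2` the origin is the
unique interior lattice point of `Conv((r • Δ̌) × {1} ∪ {(0,−1)}) ⊆ ℝ^d × ℝ`. -/
theorem stmt_9 (d : ℕ) (Δ : Set (Fin d → ℝ)) (hc : IsCompact Δ) (hconv : Convex ℝ Δ)
    (h0 : (0 : Fin d → ℝ) ∈ interior Δ)
    (hlat : ∀ x ∈ interior Δ, (∀ i, ∃ z : ℤ, x i = (z : ℝ)) → x = 0)
    (r : ℝ) (hr0 : 0 < r) (hr2 : r ≤ 2) :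
    (((0 : Fin d → ℝ), (0 : ℝ)) ∈ interior (convexHull ℝ
        ((fun a => (a, (1 : ℝ))) '' (r • Δ) ∪ {((0 : Fin d → ℝ), (-1 : ℝ))}))) ∧
    ∀ q ∈ interior (convexHull ℝ
        ((fun a => (a, (1 : ℝ))) '' (r • Δ) ∪ {((0 : Fin d → ℝ), (-1 : ℝ))})),
      ((∀ i, ∃ z : ℤ, q.1 i = (z : ℝ)) ∧ (∃ z : ℤ, q.2 = (z : ℝ))) → q = 0 := by
  have h0Δ : (0 : Fin d → ℝ) ∈ Δ := interior_subset h0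
  have h0r : (0 : Fin d → ℝ) ∈ r • Δ := ⟨0, h0Δ, smul_zero r⟩
  set S : Set ((Fin d → ℝ) × ℝ) :=
    (fun a => (a, (1 : ℝ))) '' (r • Δ) ∪ {((0 : Fin d → ℝ), (-1 : ℝ))} with hSdef
  set C := convexHull ℝ S with hCdef
  have hrΔ : Convex ℝ (r • Δ) := hconv.smul r
  have hAne : ((fun a => (a, (1 : ℝ))) '' (r • Δ)).Nonempty := ⟨_, ⟨0, h0r, rfl⟩⟩
  have hAconv : Convex ℝ ((fun a => (a, (1 : ℝ))) '' (r • Δ)) := by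
    rintro _ ⟨u, hu, rfl⟩ _ ⟨v, hv, rfl⟩ α β hα hβ hαβ
    refine ⟨α • u + β • v, hrΔ hu hv hα hβ hαβ, ?_⟩
    simp [Prod.ext_iff, Prod.smul_mk]
    linarith
  -- forward membership
  have hfwd : ∀ t : ℝ, 0 ≤ t → t ≤ 1 → ∀ a ∈ r • Δ, ((t • a, 2 * t - 1) : (Fin d → ℝ) × ℝ) ∈ C := by
    intro t ht0 ht1 a ha
    have h1 : ((a, (1:ℝ)) : (Fin d → ℝ) × ℝ) ∈ C :=
      subset_convexHull ℝ S (Or.inl ⟨a, ha, rfl⟩)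
    have h2 : (((0:Fin d → ℝ), (-1:ℝ)) : (Fin d → ℝ) × ℝ) ∈ C :=
      subset_convexHull ℝ S (Or.inr rfl)
    have h3 := (convex_convexHull ℝ S) h2 h1 (by linarith : (0:ℝ) ≤ 1 - t) ht0 (by ring)
    convert h3 using 1
    simp [Prod.ext_iff, Prod.smul_mk]
    ring
  -- backward membership
  have hbwd : ∀ q ∈ C, ∃ t : ℝ, 0 ≤ t ∧ t ≤ 1 ∧ ∃ a ∈ r • Δ, q.1 = t • a ∧ q.2 = 2 * t - 1 := by
    intro q hq
    rw [hCdef, hSdef, Set.union_singleton,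
        convexHull_insert hAne, hAconv.convexHull_eq] at hq
    rw [mem_convexJoin] at hq
    obtain ⟨p', hp', y, hy, hseg⟩ := hq
    rw [Set.mem_singleton_iff] at hp'
    subst hp'
    obtain ⟨a, ha, rfl⟩ := hy
    obtain ⟨α, β, hα, hβ, hαβ, heq⟩ := hseg
    refine ⟨β, hβ, by linarith, a, ha, ?_, ?_⟩
    · have := congrArg Prod.fst heq
      simp [Prod.smul_mk] at this
      exact this.symm
    · have := congrArg Prod.snd heq
      simp [Prod.smul_mk] at this
      linarith [this]
  obtain ⟨ε, hε, hball⟩ := Metric.isOpen_iff.mp isOpen_interior 0 h0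
  have hballΔ : Metric.ball (0 : Fin d → ℝ) ε ⊆ Δ := hball.trans interior_subset
  have hU : ∀ x : Fin d → ℝ, ∀ s : ℝ, ‖x‖ < r * ε / 4 → |s| < 1/2 → ((x, s) : (Fin d → ℝ) × ℝ) ∈ C := by
    intro x s hx hs
    obtain ⟨hs1, hs2⟩ := abs_lt.mp hs
    set t : ℝ := (s + 1) / 2 with ht
    have ht0 : (1:ℝ)/4 < t := by rw [ht]; linarith
    have ht1 : t ≤ 1 := by rw [ht]; linarith
    have htpos : (0:ℝ) < t := by linarith
    have key : r⁻¹ • t⁻¹ • x ∈ Δ := by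
      apply hballΔ
      rw [Metric.mem_ball, dist_zero_right, norm_smul, norm_smul, Real.norm_eq_abs,
          Real.norm_eq_abs, abs_inv, abs_inv, abs_of_pos hr0, abs_of_pos htpos]
      rw [← mul_assoc, mul_comm r⁻¹ t⁻¹, mul_assoc]
      have h1 : r⁻¹ * ‖x‖ < ε / 4 := by
        rw [inv_mul_lt_iff₀ hr0]
        calc ‖x‖ < r * ε / 4 := hx
          _ = r * (ε / 4) := by ring
      calc t⁻¹ * (r⁻¹ * ‖x‖) ≤ 4 * (r⁻¹ * ‖x‖) := by
            apply mul_le_mul_of_nonneg_right _ (by positivity)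
            rw [inv_le_comm₀ htpos (by norm_num)]
            linarith
        _ < 4 * (ε / 4) := by linarith [mul_lt_mul_of_pos_left h1 (by norm_num : (0:ℝ) < 4)]
        _ = ε := by ring
    have ha : t⁻¹ • x ∈ r • Δ := by
      have hxe : t⁻¹ • x = r • (r⁻¹ • t⁻¹ • x) := (smul_inv_smul₀ hr0.ne' _).symm
      rw [hxe]
      exact Set.smul_mem_smul_set key
    have h := hfwd t htpos.le ht1 _ ha
    rw [smul_inv_smul₀ htpos.ne'] at h
    have hts : 2 * t - 1 = s := by rw [ht]; ring
    rwa [hts] at h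
  constructor
  · rw [mem_interior]
    refine ⟨{q : (Fin d → ℝ) × ℝ | ‖q.1‖ < r * ε / 4 ∧ |q.2| < 1/2}, ?_, ?_, ?_⟩
    · rintro ⟨x, s⟩ ⟨hx, hs⟩; exact hU x s hx hs
    · exact (isOpen_lt (continuous_norm.comp continuous_fst) continuous_const).inter
        (isOpen_lt (continuous_abs.comp continuous_snd) continuous_const)
    · refine ⟨?_, ?_⟩
      · show ‖(0 : Fin d → ℝ)‖ < r * ε / 4
        rw [norm_zero]; positivity
      · show |(0:ℝ)| < 1/2
        norm_num
  · rintro q hq ⟨hq1, z, hq2⟩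
    obtain ⟨δ, hδ, hballq⟩ := Metric.isOpen_iff.mp isOpen_interior q hq
    have hballC : Metric.ball q δ ⊆ C := hballq.trans interior_subset
    have hup : ((q.1, q.2 + δ/2) : (Fin d → ℝ) × ℝ) ∈ C := by
      apply hballC
      rw [Metric.mem_ball, Prod.dist_eq]
      apply max_lt
      · simpa using hδ
      · rw [Real.dist_eq]
        have : q.2 + δ/2 - q.2 = δ/2 := by ring
        rw [this, abs_of_pos (by linarith)]; linarith
    have hdn : ((q.1, q.2 - δ/2) : (Fin d → ℝ) × ℝ) ∈ C := by
      apply hballC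
      rw [Metric.mem_ball, Prod.dist_eq]
      apply max_lt
      · simpa using hδ
      · rw [Real.dist_eq]
        have : q.2 - δ/2 - q.2 = -(δ/2) := by ring
        rw [this, abs_neg, abs_of_pos (by linarith)]; linarith
    obtain ⟨t₁, ht₁0, ht₁1, _, _, _, hup2⟩ := hbwd _ hup
    obtain ⟨t₂, ht₂0, ht₂1, _, _, _, hdn2⟩ := hbwd _ hdn
    simp only at hup2 hdn2
    have hq2lt : q.2 < 1 := by linarith
    have hq2gt : -1 < q.2 := by linarith
    have hz0 : z = 0 := by
      have h1 : (z : ℝ) < 1 := by rw [← hq2]; exact hq2lt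
      have h2 : (-1 : ℝ) < (z : ℝ) := by rw [← hq2]; exact hq2gt
      have h1' : z < 1 := by exact_mod_cast h1
      have h2' : (-1 : ℤ) < z := by exact_mod_cast h2
      omega
    have hq20 : q.2 = 0 := by rw [hq2, hz0]; simp
    have hslice : Metric.ball q.1 δ ⊆ Δ := by
      intro y hy
      have hyC : ((y, q.2) : (Fin d → ℝ) × ℝ) ∈ C := by
        apply hballC
        rw [Metric.mem_ball, Prod.dist_eq]
        exact max_lt (Metric.mem_ball.mp hy) (by simpa using hδ)
      obtain ⟨t, ht0, ht1, a, ha, hy1, hy2⟩ := hbwd _ hyC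
      simp only at hy1 hy2
      rw [hq20] at hy2
      have htval : t = 1/2 := by linarith
      obtain ⟨w, hw, rfl⟩ := ha
      rw [htval, smul_smul] at hy1
      have hWmem : ((1/2 : ℝ) * r) • w + (1 - (1/2 : ℝ) * r) • (0 : Fin d → ℝ) ∈ Δ :=
        hconv hw h0Δ (by positivity) (by linarith) (by ring)
      rw [hy1]
      simpa using hWmem
    have hq1int : q.1 ∈ interior Δ :=
      mem_interior.mpr ⟨Metric.ball q.1 δ, hslice, Metric.isOpen_ball, Metric.mem_ball_self hδ⟩
    have hq10 : q.1 = 0 := hlat _ hq1int hq1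
    rw [Prod.ext_iff]
    exact ⟨hq10, hq20⟩
end

section
/- Let E be a real vector space, let Δ ⊆ E be a nonempty convex set, and let r ≥ 0 be a real number. Then in E × ℝ, convexHull( ((r • Δ) × {1}) ∪ {(0, −1)} ) = { (y, s) ∈ E × ℝ : −1 ≤ s ≤ 1 and y ∈ (r·(1+s)/2) • Δ }. -/
open Pointwise Set

/-! The convex hull of a point and a convex set is the union of the segments joining the point
to the set (`convexHull_insert`). On the segment from `(0, -1)` to `(z, 1)` the point at height
`s` is `((1 + s) / 2) • z`, so the slice at height `s` is `((1 + s) / 2) • K` with `K = r • Δ`. -/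

lemma mem_segment_apex_iff {E : Type*} [AddCommGroup E] [Module ℝ E] {z : E} {q : E × ℝ} :
    q ∈ segment ℝ ((0 : E), (-1 : ℝ)) (z, 1) ↔
      -1 ≤ q.2 ∧ q.2 ≤ 1 ∧ q.1 = ((1 + q.2) / 2) • z := by
  have hpoint (θ : ℝ) : (1 - θ) • ((0 : E), (-1 : ℝ)) + θ • (z, 1) = (θ • z, 2 * θ - 1) := by
    ext <;> simp; ring
  simp only [segment_eq_image, hpoint, mem_image, mem_Icc]
  constructor
  · rintro ⟨θ, ⟨hθ₀, hθ₁⟩, rfl⟩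
    exact ⟨by linarith, by linarith, by dsimp only; congr 1; ring⟩
  · rintro ⟨hs₁, hs₂, hy⟩
    exact ⟨(1 + q.2) / 2, ⟨by linarith, by linarith⟩, Prod.ext hy.symm (by ring)⟩

lemma convexHull_suspension {E : Type*} [AddCommGroup E] [Module ℝ E] {K : Set E}
    (hK : Convex ℝ K) (hne : K.Nonempty) :
    convexHull ℝ ((fun a => (a, (1 : ℝ))) '' K ∪ {((0 : E), (-1 : ℝ))}) =
      {q : E × ℝ | -1 ≤ q.2 ∧ q.2 ≤ 1 ∧ q.1 ∈ ((1 + q.2) / 2) • K} := by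
  have hK₁ : Convex ℝ ((fun a => (a, (1 : ℝ))) '' K) :=
    prod_singleton ▸ hK.prod (convex_singleton 1)
  rw [union_comm, ← insert_eq, convexHull_insert (hne.image _), hK₁.convexHull_eq,
    convexJoin_singleton_left, biUnion_image]
  ext q
  simp only [mem_iUnion, exists_prop, mem_segment_apex_iff, mem_ofPred_eq, mem_smul_set]
  constructor
  · rintro ⟨z, hz, hs₁, hs₂, hy⟩
    exact ⟨hs₁, hs₂, z, hz, hy.symm⟩
  · rintro ⟨hs₁, hs₂, z, hz, hy⟩
    exact ⟨z, hz, hs₁, hs₂, hy.symm⟩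

theorem stmt_11_general (E : Type*) [AddCommGroup E] [Module ℝ E] (Δ : Set E) (hne : Δ.Nonempty)
    (hconv : Convex ℝ Δ) (r : ℝ) :
    convexHull ℝ ((fun a => (a, (1 : ℝ))) '' (r • Δ) ∪ {((0 : E), (-1 : ℝ))})
      = {q : E × ℝ | -1 ≤ q.2 ∧ q.2 ≤ 1 ∧ q.1 ∈ (r * (1 + q.2) / 2) • Δ} := by
  rw [convexHull_suspension (hconv.smul r) hne.smul_set]
  ext q
  simp only [mem_ofPred_eq, smul_smul, div_mul_eq_mul_div, mul_comm r]

/-- Slice description of the suspended convex body: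
`Conv((r • Δ) × {1} ∪ {(0,−1)}) = { (y,s) | −1 ≤ s ≤ 1 and y ∈ (r(1+s)/2) • Δ }`. -/
theorem stmt_11 (E : Type*) [AddCommGroup E] [Module ℝ E] (Δ : Set E) (hne : Δ.Nonempty)
    (hconv : Convex ℝ Δ) (r : ℝ) (hr : 0 ≤ r) :
    convexHull ℝ ((fun a => (a, (1 : ℝ))) '' (r • Δ) ∪ {((0 : E), (-1 : ℝ))})
      = {q : E × ℝ | -1 ≤ q.2 ∧ q.2 ≤ 1 ∧ q.1 ∈ (r * (1 + q.2) / 2) • Δ} :=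
  stmt_11_general E Δ hne hconv r
end
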